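/- arXiv:math/0007176 — 6 statements merged into one kernel-verified Lean document; each statement's English description precedes it below -/
import Mathlib

section
/- For 4 ≤ m ≤ k ≤ 2m−2, the quotient g_m / C^k g_m of the algebra g_m by the k-th term of its lower central series is a nilpotent Lie algebra of dimension k+3 with basis X̄₁,...,X̄_{k+1}, X̄_{2m+1}, X̄_{2m+2} and only nonzero brackets [X̄₁, X̄_j] = X̄_{j+1} (2 ≤ j ≤ k), [X̄₂, X̄₃] = X̄_{2m+1}, [X̄₂, X̄₄] = X̄_{2m+2}, [X̄₁, X̄_{2m+1}] = X̄_{2m+2}; moreover its derived subalgebra is abelian (the quotient is 1-abelian). -/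
open Module

private lemma auxLie {L : Type*} [LieRing L] [LieAlgebra ℂ L] {A B : Set L} {P : Submodule ℂ L}
    (h : ∀ a ∈ A, ∀ b ∈ B, ⁅a, b⁆ ∈ P) :
    ∀ u ∈ Submodule.span ℂ A, ∀ v ∈ Submodule.span ℂ B, ⁅u, v⁆ ∈ P := by
  intro u hu v hv
  have h1 : ∀ a ∈ A, ⁅a, v⁆ ∈ P := by
    intro a ha
    have hle : Submodule.span ℂ B ≤ P.comap (LieAlgebra.ad ℂ L a) :=
      Submodule.span_le.mpr fun b hb => by
        simpa [Submodule.mem_comap, LieAlgebra.ad_apply] using h a ha b hb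
    simpa [Submodule.mem_comap, LieAlgebra.ad_apply] using hle hv
  have hle : Submodule.span ℂ A ≤ P.comap
      ({ toFun := fun u => ⁅u, v⁆,
         map_add' := fun x y => add_lie x y v,
         map_smul' := fun c x => smul_lie c x v } : L →ₗ[ℂ] L) :=
    Submodule.span_le.mpr fun a ha => by
      simpa [Submodule.mem_comap] using h1 a ha
  simpa [Submodule.mem_comap] using hle hu

/-- for `4 ≤ m ≤ k ≤ 2m-2`, the quotient of the algebra `g_m` (as in
Statement 6) by the `k`-th term of its lower central series is a nilpotent Lie
algebra of dimension `k+3`; the classes of `X 1, ..., X (k+1), X (2m+1), X (2m+2)`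
form a basis, the only nonzero brackets are `[X̄ 1, X̄ j] = X̄ (j+1)` for `2 ≤ j ≤ k`,
`[X̄ 2, X̄ 3] = X̄ (2m+1)`, `[X̄ 2, X̄ 4] = X̄ (2m+2)`, `[X̄ 1, X̄ (2m+1)] = X̄ (2m+2)`,
and the derived subalgebra of the quotient is abelian. -/
theorem stmt8 (m k : ℕ) (hm : 4 ≤ m) (hmk : m ≤ k) (hk : k ≤ 2 * m - 2)
    (g : Type*) [LieRing g] [LieAlgebra ℂ g]
    (X : ℕ → g)
    (hindep : LinearIndependent ℂ (fun i : Fin (2 * m + 2) => X (i.1 + 1)))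
    (hspan : Submodule.span ℂ (Set.range (fun i : Fin (2 * m + 2) => X (i.1 + 1))) = ⊤)
    (h1 : ∀ j, 2 ≤ j → j ≤ 2 * m - 1 → ⁅X 1, X j⁆ = X (j + 1))
    (h2 : ∀ j, 2 ≤ j → j ≤ m → ⁅X j, X (2 * m + 1 - j)⁆ = ((-1 : ℂ) ^ j) • X (2 * m))
    (h3 : ⁅X 2, X 3⁆ = X (2 * m + 1))
    (h4 : ⁅X 2, X 4⁆ = X (2 * m + 2))
    (h5 : ⁅X 1, X (2 * m + 1)⁆ = X (2 * m + 2))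
    (h0 : ∀ i j, 1 ≤ i → i < j → j ≤ 2 * m + 2 →
      ¬(i = 1 ∧ 2 ≤ j ∧ j ≤ 2 * m - 1) →
      ¬(2 ≤ i ∧ i ≤ m ∧ j = 2 * m + 1 - i) →
      ¬(i = 2 ∧ j = 3) → ¬(i = 2 ∧ j = 4) → ¬(i = 1 ∧ j = 2 * m + 1) →
      ⁅X i, X j⁆ = 0) :
    ∀ (I : LieIdeal ℂ g), I = LieModule.lowerCentralSeries ℂ g g k →
    ∀ (Xb : ℕ → (g ⧸ I)), (∀ i, Xb i = LieSubmodule.Quotient.mk' I (X i)) →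
    ∀ idx : Fin (k + 3) → ℕ,
      (∀ i : Fin (k + 3), idx i =
        if i.1 ≤ k then i.1 + 1 else if i.1 = k + 1 then 2 * m + 1 else 2 * m + 2) →
    (finrank ℂ (g ⧸ I) = k + 3) ∧
    LinearIndependent ℂ (fun i : Fin (k + 3) => Xb (idx i)) ∧
    Submodule.span ℂ (Set.range (fun i : Fin (k + 3) => Xb (idx i))) = ⊤ ∧
    (∀ j, 2 ≤ j → j ≤ k → ⁅Xb 1, Xb j⁆ = Xb (j + 1)) ∧
    ⁅Xb 2, Xb 3⁆ = Xb (2 * m + 1) ∧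
    ⁅Xb 2, Xb 4⁆ = Xb (2 * m + 2) ∧
    ⁅Xb 1, Xb (2 * m + 1)⁆ = Xb (2 * m + 2) ∧
    (∀ i j, i ∈ Finset.Icc 1 (k + 1) ∪ {2 * m + 1, 2 * m + 2} →
      j ∈ Finset.Icc 1 (k + 1) ∪ {2 * m + 1, 2 * m + 2} → i < j →
      ¬(i = 1 ∧ 2 ≤ j ∧ j ≤ k) → ¬(i = 2 ∧ j = 3) → ¬(i = 2 ∧ j = 4) →
      ¬(i = 1 ∧ j = 2 * m + 1) → ⁅Xb i, Xb j⁆ = 0) ∧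
    ⁅LieModule.lowerCentralSeries ℂ (g ⧸ I) (g ⧸ I) 1,
        LieModule.lowerCentralSeries ℂ (g ⧸ I) (g ⧸ I) 1⁆ =
      (⊥ : LieIdeal ℂ (g ⧸ I)) := by
  -- every element is in the span of X 1 .. X (2m+2)
  have hX : ∀ x : g, x ∈ Submodule.span ℂ (X '' Set.Icc 1 (2 * m + 2)) := by
    intro x
    have hle : (⊤ : Submodule ℂ g) ≤ Submodule.span ℂ (X '' Set.Icc 1 (2 * m + 2)) := by
      rw [← hspan]
      refine Submodule.span_mono ?_
      rintro _ ⟨i, rfl⟩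
      exact ⟨i.1 + 1, Set.mem_Icc.mpr ⟨by omega, by omega⟩, rfl⟩
    exact hle trivial
  -- bracket table, a < b
  have bkt0 : ∀ a b : ℕ, 1 ≤ a → a < b → b ≤ 2 * m + 2 →
      ∃ (c : ℂ) (t : ℕ), ⁅X a, X b⁆ = c • X t ∧
        (((a = 1 ∧ 2 ≤ b ∧ b ≤ 2 * m - 1 ∧ t = b + 1) ∨
          (a = 2 ∧ b = 3 ∧ t = 2 * m + 1) ∨
          (a = 2 ∧ b = 4 ∧ t = 2 * m + 2) ∨
          (a = 1 ∧ b = 2 * m + 1 ∧ t = 2 * m + 2) ∨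
          (2 ≤ a ∧ a ≤ m ∧ b = 2 * m + 1 - a ∧ t = 2 * m)) ∨ c = 0) := by
    intro a b ha hab hb
    by_cases c1 : a = 1 ∧ 2 ≤ b ∧ b ≤ 2 * m - 1
    · refine ⟨1, b + 1, ?_, Or.inl (Or.inl ⟨c1.1, c1.2.1, c1.2.2, rfl⟩)⟩
      rw [c1.1, h1 b c1.2.1 c1.2.2, one_smul]
    by_cases c2 : a = 2 ∧ b = 3
    · exact ⟨1, 2 * m + 1, by rw [c2.1, c2.2, h3, one_smul],
        Or.inl (Or.inr (Or.inl ⟨c2.1, c2.2, rfl⟩))⟩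
    by_cases c3 : a = 2 ∧ b = 4
    · exact ⟨1, 2 * m + 2, by rw [c3.1, c3.2, h4, one_smul],
        Or.inl (Or.inr (Or.inr (Or.inl ⟨c3.1, c3.2, rfl⟩)))⟩
    by_cases c4 : a = 1 ∧ b = 2 * m + 1
    · exact ⟨1, 2 * m + 2, by rw [c4.1, c4.2, h5, one_smul],
        Or.inl (Or.inr (Or.inr (Or.inr (Or.inl ⟨c4.1, c4.2, rfl⟩))))⟩
    by_cases c5 : 2 ≤ a ∧ a ≤ m ∧ b = 2 * m + 1 - a
    · refine ⟨(-1 : ℂ) ^ a, 2 * m, ?_, Or.inl (Or.inr (Or.inr (Or.inr (Or.inr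
        ⟨c5.1, c5.2.1, c5.2.2, rfl⟩))))⟩
      rw [c5.2.2, h2 a c5.1 c5.2.1]
    · exact ⟨0, 0, by rw [h0 a b ha hab hb c1 c5 c2 c3 c4, zero_smul], Or.inr rfl⟩
  -- full bracket table
  have bkt : ∀ a b : ℕ, 1 ≤ a → a ≤ 2 * m + 2 → 1 ≤ b → b ≤ 2 * m + 2 →
      ∃ (c : ℂ) (t : ℕ), ⁅X a, X b⁆ = c • X t ∧
        (((min a b = 1 ∧ 2 ≤ max a b ∧ max a b ≤ 2 * m - 1 ∧ t = max a b + 1) ∨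
          (min a b = 2 ∧ max a b = 3 ∧ t = 2 * m + 1) ∨
          (min a b = 2 ∧ max a b = 4 ∧ t = 2 * m + 2) ∨
          (min a b = 1 ∧ max a b = 2 * m + 1 ∧ t = 2 * m + 2) ∨
          (2 ≤ min a b ∧ min a b ≤ m ∧ max a b = 2 * m + 1 - min a b ∧ t = 2 * m)) ∨
          c = 0) := by
    intro a b ha1 ha2 hb1 hb2
    rcases lt_trichotomy a b with hlt | heq | hgt
    · obtain ⟨c, t, hct, hd⟩ := bkt0 a b ha1 hlt hb2
      refine ⟨c, t, hct, ?_⟩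
      rw [min_eq_left hlt.le, max_eq_right hlt.le]
      exact hd
    · exact ⟨0, 0, by rw [heq, lie_self, zero_smul], Or.inr rfl⟩
    · obtain ⟨c, t, hct, hd⟩ := bkt0 b a hb1 hgt ha2
      refine ⟨-c, t, ?_, ?_⟩
      · rw [← lie_skew, hct, neg_smul]
      rw [min_eq_right hgt.le, max_eq_left hgt.le]
      rcases hd with hd | hd
      · exact Or.inl hd
      · exact Or.inr (by rw [hd, neg_zero])
  -- membership helper
  have hsm : ∀ (A : Set ℕ) (c : ℂ) (t : ℕ), t ∈ A →
      c • X t ∈ Submodule.span ℂ (X '' A) := fun A c t ht =>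
    Submodule.smul_mem _ c (Submodule.subset_span ⟨t, ht, rfl⟩)
  -- main bracket-into-span lemma
  have main : ∀ (B T : Set ℕ),
      (∀ a b t, 1 ≤ a → a ≤ 2 * m + 2 → b ∈ B →
        (((min a b = 1 ∧ 2 ≤ max a b ∧ max a b ≤ 2 * m - 1 ∧ t = max a b + 1) ∨
          (min a b = 2 ∧ max a b = 3 ∧ t = 2 * m + 1) ∨
          (min a b = 2 ∧ max a b = 4 ∧ t = 2 * m + 2) ∨
          (min a b = 1 ∧ max a b = 2 * m + 1 ∧ t = 2 * m + 2) ∨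
          (2 ≤ min a b ∧ min a b ≤ m ∧ max a b = 2 * m + 1 - min a b ∧ t = 2 * m))) →
        t ∈ T) →
      (∀ b ∈ B, 1 ≤ b ∧ b ≤ 2 * m + 2) →
      ∀ (x y : g), y ∈ Submodule.span ℂ (X '' B) →
        ⁅x, y⁆ ∈ Submodule.span ℂ (X '' T) := by
    intro B T hT hB x y hy
    refine auxLie ?_ x (hX x) y hy
    rintro _ ⟨a, ha, rfl⟩ _ ⟨b, hb, rfl⟩
    rw [Set.mem_Icc] at ha
    obtain ⟨hb1, hb2⟩ := hB b hb
    obtain ⟨c, t, hct, hd⟩ := bkt a b ha.1 ha.2 hb1 hb2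
    rw [hct]
    rcases hd with hd | hd
    · exact hsm T c t (hT a b t ha.1 ha.2 hb hd)
    · rw [hd, zero_smul]; exact zero_mem _
  -- step lemma for lower central series
  have stepL : ∀ (n : ℕ) (B T : Set ℕ),
      (∀ x, x ∈ LieModule.lowerCentralSeries ℂ g g n → x ∈ Submodule.span ℂ (X '' B)) →
      (∀ a b t, 1 ≤ a → a ≤ 2 * m + 2 → b ∈ B →
        (((min a b = 1 ∧ 2 ≤ max a b ∧ max a b ≤ 2 * m - 1 ∧ t = max a b + 1) ∨
          (min a b = 2 ∧ max a b = 3 ∧ t = 2 * m + 1) ∨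
          (min a b = 2 ∧ max a b = 4 ∧ t = 2 * m + 2) ∨
          (min a b = 1 ∧ max a b = 2 * m + 1 ∧ t = 2 * m + 2) ∨
          (2 ≤ min a b ∧ min a b ≤ m ∧ max a b = 2 * m + 1 - min a b ∧ t = 2 * m))) →
        t ∈ T) →
      (∀ b ∈ B, 1 ≤ b ∧ b ≤ 2 * m + 2) →
      (∀ x, x ∈ LieModule.lowerCentralSeries ℂ g g (n + 1) →
        x ∈ Submodule.span ℂ (X '' T)) := by
    intro n B T hprev hT hB x hx
    rw [LieModule.lowerCentralSeries_succ] at hx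
    have hx' := (LieSubmodule.mem_toSubmodule _).mpr hx
    rw [LieSubmodule.lieIdeal_oper_eq_linear_span'] at hx'
    have hle : Submodule.span ℂ {z : g | ∃ p ∈ (⊤ : LieIdeal ℂ g),
        ∃ q ∈ LieModule.lowerCentralSeries ℂ g g n, ⁅p, q⁆ = z} ≤
        Submodule.span ℂ (X '' T) := by
      refine Submodule.span_le.mpr ?_
      rintro _ ⟨p, -, q, hq, rfl⟩
      exact main B T hT hB p q (hprev q hq)
    exact hle hx'
  have tb0 : ∀ x, x ∈ LieModule.lowerCentralSeries ℂ g g 0 →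
      x ∈ Submodule.span ℂ (X '' Set.Icc 1 (2 * m + 2)) := fun x _ => hX x
  have tb1 := stepL 0 _ (Set.Icc 3 (2 * m + 2)) tb0
    (by intro a b t ha1 ha2 hb hd; rw [Set.mem_Icc] at hb ⊢; omega)
    (by intro b hb; rw [Set.mem_Icc] at hb; omega)
  have tb2 := stepL 1 _ (Set.Icc 4 (2 * m + 2)) tb1
    (by intro a b t ha1 ha2 hb hd; rw [Set.mem_Icc] at hb ⊢; omega)
    (by intro b hb; rw [Set.mem_Icc] at hb; omega)
  have tb3 := stepL 2 _ (Set.Icc 5 (2 * m) ∪ {2 * m + 2}) tb2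
    (by intro a b t ha1 ha2 hb hd
        rw [Set.mem_Icc] at hb
        simp only [Set.mem_union, Set.mem_Icc, Set.mem_singleton_iff]
        omega)
    (by intro b hb; rw [Set.mem_Icc] at hb; omega)
  have tb4 := stepL 3 _ (Set.Icc 6 (2 * m)) tb3
    (by intro a b t ha1 ha2 hb hd
        simp only [Set.mem_union, Set.mem_Icc, Set.mem_singleton_iff] at hb
        rw [Set.mem_Icc]
        omega)
    (by intro b hb
        simp only [Set.mem_union, Set.mem_Icc, Set.mem_singleton_iff] at hb
        omega)
  have hind : ∀ n, 4 ≤ n → n ≤ k →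
      (∀ x, x ∈ LieModule.lowerCentralSeries ℂ g g n →
        x ∈ Submodule.span ℂ (X '' Set.Icc (n + 2) (2 * m))) := by
    intro n hn4
    induction n, hn4 using Nat.le_induction with
    | base => intro _; exact tb4
    | succ n hn ih =>
      intro hsk
      exact stepL n _ (Set.Icc (n + 3) (2 * m)) (ih (by omega))
        (by intro a b t ha1 ha2 hb hd; rw [Set.mem_Icc] at hb ⊢; omega)
        (by intro b hb; rw [Set.mem_Icc] at hb; omega)
  -- lower bound
  have hmemlcs : ∀ t, 3 ≤ t → t ≤ 2 * m → X t ∈ LieModule.lowerCentralSeries ℂ g g (t - 2) := by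
    intro t ht3
    induction t, ht3 using Nat.le_induction with
    | base =>
      intro _
      show X 3 ∈ LieModule.lowerCentralSeries ℂ g g 1
      rw [show (1 : ℕ) = 0 + 1 from rfl, LieModule.lowerCentralSeries_succ,
        LieModule.lowerCentralSeries_zero, ← h1 2 (by omega) (by omega)]
      exact LieSubmodule.lie_mem_lie (LieSubmodule.mem_top _) (LieSubmodule.mem_top _)
    | succ t ht ih =>
      intro h2m
      have he : t + 1 - 2 = (t - 2) + 1 := by omega
      rw [he, LieModule.lowerCentralSeries_succ, ← h1 t (by omega) (by omega)]
      exact LieSubmodule.lie_mem_lie (LieSubmodule.mem_top _) (ih (by omega))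
  have hlb : ∀ t, k + 2 ≤ t → t ≤ 2 * m → X t ∈ LieModule.lowerCentralSeries ℂ g g k := by
    intro t ht1 ht2
    exact LieModule.antitone_lowerCentralSeries ℂ g g (show k ≤ t - 2 by omega)
      (hmemlcs t (by omega) ht2)
  -- the ideal identification
  have hIeq : ∀ x : g, x ∈ LieModule.lowerCentralSeries ℂ g g k ↔
      x ∈ Submodule.span ℂ (X '' Set.Icc (k + 2) (2 * m)) := by
    intro x
    constructor
    · intro hx
      exact hind k (by omega) le_rfl x hx
    · intro hx
      have hle : Submodule.span ℂ (X '' Set.Icc (k + 2) (2 * m)) ≤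
          (LieModule.lowerCentralSeries ℂ g g k).toSubmodule := by
        refine Submodule.span_le.mpr ?_
        rintro _ ⟨t, ht, rfl⟩
        rw [Set.mem_Icc] at ht
        exact hlb t ht.1 ht.2
      exact hle hx
  -- ===== quotient part =====
  intro I hI Xb hXb idx hidx
  have hmemI : ∀ x : g, x ∈ I ↔
      x ∈ Submodule.span ℂ (X '' Set.Icc (k + 2) (2 * m)) := by
    intro x; rw [hI]; exact hIeq x
  have hz : ∀ x : g, x ∈ Submodule.span ℂ (X '' Set.Icc (k + 2) (2 * m)) →
      LieSubmodule.Quotient.mk' I x = 0 := by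
    intro x hx
    exact (LieSubmodule.Quotient.mk_eq_zero I).mpr ((hmemI x).mpr hx)
  have hbq : ∀ x y : g,
      ⁅LieSubmodule.Quotient.mk' I x, LieSubmodule.Quotient.mk' I y⁆ =
        LieSubmodule.Quotient.mk' I ⁅x, y⁆ :=
    fun x y => (LieSubmodule.Quotient.mk_bracket I x y).symm
  let plin : g →ₗ[ℂ] g ⧸ I := (LieSubmodule.Quotient.mk' I).toLinearMap
  have hplin : ∀ x : g, plin x = LieSubmodule.Quotient.mk' I x := fun x => rfl
  have hidxval : ∀ (v : ℕ) (hv : v < k + 3), idx ⟨v, hv⟩ =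
      if v ≤ k then v + 1 else if v = k + 1 then 2 * m + 1 else 2 * m + 2 :=
    fun v hv => hidx ⟨v, hv⟩
  have hidxprop : ∀ i : Fin (k + 3), (i.1 ≤ k ∧ idx i = i.1 + 1) ∨
      (i.1 = k + 1 ∧ idx i = 2 * m + 1) ∨ (i.1 = k + 2 ∧ idx i = 2 * m + 2) := by
    intro i
    have h := hidx i
    have hlt := i.isLt
    by_cases h1' : i.1 ≤ k
    · left; rw [if_pos h1'] at h; exact ⟨h1', h⟩
    · rw [if_neg h1'] at h
      by_cases h2' : i.1 = k + 1
      · right; left; rw [if_pos h2'] at h; exact ⟨h2', h⟩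
      · right; right; rw [if_neg h2'] at h; exact ⟨by omega, h⟩
  let B : Basis (Fin (2 * m + 2)) ℂ g := Basis.mk hindep (le_of_eq hspan.symm)
  have hBe : ∀ i : Fin (2 * m + 2), B i = X (i.1 + 1) := fun i => Basis.mk_apply _ _ i
  have hjv : ∀ i : Fin (k + 3), idx i - 1 < 2 * m + 2 := by
    intro i; rcases hidxprop i with h | h | h <;> omega
  have hli : LinearIndependent ℂ (fun i : Fin (k + 3) => Xb (idx i)) := by
    rw [Fintype.linearIndependent_iff]
    intro c hc i₀
    have hXjv : ∀ i : Fin (k + 3), X (idx i) = B ⟨idx i - 1, hjv i⟩ := by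
      intro i
      have h1' : idx i - 1 + 1 = idx i := by rcases hidxprop i with h | h | h <;> omega
      rw [hBe, h1']
    have hmk0 : plin (∑ i, c i • X (idx i)) = 0 := by
      have heq : plin (∑ i, c i • X (idx i)) = ∑ i, c i • Xb (idx i) := by
        rw [map_sum]
        refine Finset.sum_congr rfl fun i _ => ?_
        rw [map_smul, hplin, ← hXb]
      rw [heq, hc]
    have hy : (∑ i, c i • X (idx i)) ∈
        Submodule.span ℂ (X '' Set.Icc (k + 2) (2 * m)) :=
      (hmemI _).mp ((LieSubmodule.Quotient.mk_eq_zero I).mp (by rw [← hplin]; exact hmk0))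
    have hker : Submodule.span ℂ (X '' Set.Icc (k + 2) (2 * m)) ≤
        LinearMap.ker (B.coord ⟨idx i₀ - 1, hjv i₀⟩) := by
      refine Submodule.span_le.mpr ?_
      rintro _ ⟨t, ht, rfl⟩
      rw [Set.mem_Icc] at ht
      have hlt : t - 1 < 2 * m + 2 := by omega
      have hXt : X t = B ⟨t - 1, hlt⟩ := by
        rw [hBe]
        show X t = X (t - 1 + 1)
        congr 1
        omega
      rw [SetLike.mem_coe, LinearMap.mem_ker, hXt, Basis.coord_apply, Basis.repr_self,
        Finsupp.single_apply, if_neg ?_]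
      intro heq
      rw [Fin.mk_eq_mk] at heq
      rcases hidxprop i₀ with h | h | h <;> omega
    have h0' : B.coord ⟨idx i₀ - 1, hjv i₀⟩ (∑ i, c i • X (idx i)) = 0 := hker hy
    rw [map_sum, Finset.sum_eq_single i₀] at h0'
    · rw [map_smul, hXjv i₀, Basis.coord_apply, Basis.repr_self, Finsupp.single_eq_same,
        smul_eq_mul, mul_one] at h0'
      exact h0'
    · intro i _ hne
      rw [map_smul, hXjv i, Basis.coord_apply, Basis.repr_self, Finsupp.single_apply,
        if_neg ?_, smul_zero]
      intro heq
      rw [Fin.mk_eq_mk] at heq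
      refine hne (Fin.ext ?_)
      rcases hidxprop i with h | h | h <;> rcases hidxprop i₀ with h' | h' | h' <;> omega
    · intro h; exact absurd (Finset.mem_univ i₀) h
  have hsp : Submodule.span ℂ (Set.range (fun i : Fin (k + 3) => Xb (idx i))) = ⊤ := by
    rw [eq_top_iff]
    rintro u -
    obtain ⟨x, rfl⟩ := LieSubmodule.Quotient.surjective_mk' I u
    have hx : x ∈ Submodule.span ℂ (Set.range fun i : Fin (2 * m + 2) => X (i.1 + 1)) := by
      rw [hspan]; trivial
    have himg := Submodule.apply_mem_span_image_of_mem_span (f := plin) hx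
    refine Submodule.span_le.mpr ?_ himg
    rintro _ ⟨_, ⟨i, rfl⟩, rfl⟩
    have hlt := i.isLt
    by_cases hc1 : i.1 ≤ k
    · refine Submodule.subset_span ⟨⟨i.1, by omega⟩, ?_⟩
      show Xb (idx ⟨i.1, by omega⟩) = plin (X (i.1 + 1))
      rw [hXb, hidxval i.1 (by omega), if_pos hc1, hplin]
    · by_cases hc2 : i.1 + 1 = 2 * m + 1
      · refine Submodule.subset_span ⟨⟨k + 1, by omega⟩, ?_⟩
        show Xb (idx ⟨k + 1, by omega⟩) = plin (X (i.1 + 1))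
        rw [hXb, hidxval (k + 1) (by omega), if_neg (by omega), if_pos rfl, hc2, hplin]
      · by_cases hc3 : i.1 + 1 = 2 * m + 2
        · refine Submodule.subset_span ⟨⟨k + 2, by omega⟩, ?_⟩
          show Xb (idx ⟨k + 2, by omega⟩) = plin (X (i.1 + 1))
          rw [hXb, hidxval (k + 2) (by omega), if_neg (by omega), if_neg (by omega),
            hc3, hplin]
        · have h0'' : plin (X (i.1 + 1)) = 0 := by
            rw [hplin]
            exact hz _ (Submodule.subset_span
              ⟨i.1 + 1, Set.mem_Icc.mpr ⟨by omega, by omega⟩, rfl⟩)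
          rw [h0'']
          exact zero_mem _
  refine ⟨?_, hli, hsp, ?_, ?_, ?_, ?_, ?_, ?_⟩
  · have Bq : Basis (Fin (k + 3)) ℂ (g ⧸ I) := Basis.mk hli (le_of_eq hsp.symm)
    rw [finrank_eq_card_basis Bq, Fintype.card_fin]
  · -- [Xb 1, Xb j] = Xb (j+1)
    intro j hj2 hjk
    rw [hXb 1, hXb j, hXb (j + 1), hbq, h1 j hj2 (by omega)]
  · rw [hXb 2, hXb 3, hXb (2 * m + 1), hbq, h3]
  · rw [hXb 2, hXb 4, hXb (2 * m + 2), hbq, h4]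
  · rw [hXb 1, hXb (2 * m + 1), hXb (2 * m + 2), hbq, h5]
  · -- vanishing brackets
    intro i j hi hj hij e1 e2 e3 e4
    simp only [Finset.mem_union, Finset.mem_Icc, Finset.mem_insert,
      Finset.mem_singleton] at hi hj
    obtain ⟨c, t, hct, hd⟩ := bkt i j (by omega) (by omega) (by omega) (by omega)
    rw [hXb i, hXb j, hbq, hct, map_smul]
    rcases hd with hd | hd
    · have ht : k + 2 ≤ t ∧ t ≤ 2 * m := by omega
      rw [hz (X t) (Submodule.subset_span ⟨t, Set.mem_Icc.mpr ht, rfl⟩), smul_zero]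
    · rw [hd, zero_smul]
  · -- derived subalgebra of the quotient is abelian
    have hd1 : ∀ x y : g, ⁅x, y⁆ ∈ Submodule.span ℂ (X '' Set.Icc 3 (2 * m + 2)) := by
      intro x y
      exact main (Set.Icc 1 (2 * m + 2)) (Set.Icc 3 (2 * m + 2))
        (by intro a b t ha1 ha2 hb hd; rw [Set.mem_Icc] at hb ⊢; omega)
        (by intro b hb; rw [Set.mem_Icc] at hb; omega) x y (hX y)
    have hQ3 : ∀ u : g ⧸ I, u ∈ LieModule.lowerCentralSeries ℂ (g ⧸ I) (g ⧸ I) 1 →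
        u ∈ Submodule.span ℂ (plin '' (X '' Set.Icc 3 (2 * m + 2))) := by
      intro u hu
      rw [show (1 : ℕ) = 0 + 1 from rfl, LieModule.lowerCentralSeries_succ] at hu
      have hu' := (LieSubmodule.mem_toSubmodule _).mpr hu
      rw [LieSubmodule.lieIdeal_oper_eq_linear_span'] at hu'
      refine Submodule.span_le.mpr ?_ hu'
      rintro _ ⟨p, -, q, -, rfl⟩
      obtain ⟨xp, rfl⟩ := LieSubmodule.Quotient.surjective_mk' I p
      obtain ⟨xq, rfl⟩ := LieSubmodule.Quotient.surjective_mk' I q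
      rw [hbq]
      exact Submodule.apply_mem_span_image_of_mem_span (f := plin) (hd1 xp xq)
    have hzero : ∀ u ∈ Submodule.span ℂ (plin '' (X '' Set.Icc 3 (2 * m + 2))),
        ∀ v ∈ Submodule.span ℂ (plin '' (X '' Set.Icc 3 (2 * m + 2))), ⁅u, v⁆ = 0 := by
      intro u hu v hv
      have hmem := auxLie (P := (⊥ : Submodule ℂ (g ⧸ I))) ?_ u hu v hv
      · simpa using hmem
      rintro _ ⟨_, ⟨a, ha, rfl⟩, rfl⟩ _ ⟨_, ⟨b, hb', rfl⟩, rfl⟩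
      rw [Set.mem_Icc] at ha hb'
      obtain ⟨c, t, hct, hd⟩ := bkt a b (by omega) (by omega) (by omega) (by omega)
      rw [Submodule.mem_bot]
      show ⁅LieSubmodule.Quotient.mk' I (X a), LieSubmodule.Quotient.mk' I (X b)⁆ = 0
      rw [hbq, hct, map_smul]
      rcases hd with hd | hd
      · have ht : k + 2 ≤ t ∧ t ≤ 2 * m := by omega
        rw [hz (X t) (Submodule.subset_span ⟨t, Set.mem_Icc.mpr ht, rfl⟩), smul_zero]
      · rw [hd, zero_smul]
    rw [eq_bot_iff, LieSubmodule.lie_le_iff]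
    intro p hp q hq
    rw [LieSubmodule.mem_bot]
    exact hzero p (hQ3 p hp) q (hQ3 q hq)
end

section
/- For 4 ≤ m ≤ k ≤ 2m−2, the quotient algebra n = g_m / C^k g_m admits a 2-dimensional torus of semisimple derivations: the two diagonal linear maps t₁, t₂ defined on the basis by t₁(X̄₁) = X̄₁, t₁(X̄₂) = (k−1) X̄₂, t₁(X̄_j) = (k−3+j) X̄_j for 3 ≤ j ≤ k+1, t₁(X̄_{2m+1}) = (2k−1) X̄_{2m+1}, t₁(X̄_{2m+2}) = 2k X̄_{2m+2}, and t₂(X̄₁) = 0, t₂(X̄_j) = X̄_j for 2 ≤ j ≤ k+1, t₂(X̄_{2m+1}) = 2 X̄_{2m+1}, t₂(X̄_{2m+2}) = 2 X̄_{2m+2}, are both derivations of n and commute with each other. -/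
/-!
The basis vectors `X̄ a` are common eigenvectors of `t₁` and `t₂`, so the two maps commute. A map
that is diagonal on a spanning set `X̄ a` with eigenvalues `w a` is a derivation as soon as every
bracket `⁅X̄ a, X̄ b⁆` is an eigenvector with eigenvalue `w a + w b`, i.e. as soon as `w` is additive
along the structure constants; for `t₁` and `t₂` this is a direct check on the four families of
nonzero brackets.
-/

open LieModule

section Derivation

variable {R L : Type*} [CommRing R] [LieRing L] [LieAlgebra R L]

theorem leibniz_of_span {s : Set L} (hs : Submodule.span R s = ⊤) (t : L →ₗ[R] L)
    (h : ∀ x ∈ s, ∀ y ∈ s, t ⁅x, y⁆ = ⁅t x, y⁆ + ⁅x, t y⁆) (x y : L) :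
    t ⁅x, y⁆ = ⁅t x, y⁆ + ⁅x, t y⁆ := by
  let ad : L →ₗ[R] L →ₗ[R] L := (toEnd R L L : L →ₗ[R] Module.End R L)
  have key : ad.compr₂ t = ad ∘ₗ t + ad.compl₂ t :=
    LinearMap.ext_on hs fun x hx => LinearMap.ext_on hs fun y hy => by
      simpa [ad] using h x hx y hy
  simpa [ad] using LinearMap.congr_fun₂ key x y

theorem leibniz_of_eigenvector {t : L →ₗ[R] L} {x y : L} {a b : R} (hx : t x = a • x)
    (hy : t y = b • y) (hxy : t ⁅x, y⁆ = (a + b) • ⁅x, y⁆) :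
    t ⁅x, y⁆ = ⁅t x, y⁆ + ⁅x, t y⁆ := by
  rw [hxy, hx, hy, smul_lie, lie_smul, add_smul]

theorem lie_eigenvector_swap {t : L →ₗ[R] L} {x y : L} {a b : R}
    (hxy : t ⁅x, y⁆ = (a + b) • ⁅x, y⁆) : t ⁅y, x⁆ = (b + a) • ⁅y, x⁆ := by
  rw [← lie_skew, map_neg, hxy, smul_neg, add_comm]

end Derivation

theorem LinearMap.comp_comm_of_eigenvectors {R M : Type*} [CommRing R] [AddCommGroup M]
    [Module R M] {s : Set M} (hs : Submodule.span R s = ⊤) {f g : M →ₗ[R] M}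
    (h : ∀ x ∈ s, ∃ a b : R, f x = a • x ∧ g x = b • x) : f ∘ₗ g = g ∘ₗ f :=
  LinearMap.ext_on hs fun x hx => by
    obtain ⟨a, b, hf, hg⟩ := h x hx
    simp [hf, hg, smul_smul, mul_comm]

def basisIndices (m k : ℕ) : Finset ℕ := Finset.Icc 1 (k + 1) ∪ {2 * m + 1, 2 * m + 2}

theorem mem_basisIndices {m k a : ℕ} :
    a ∈ basisIndices m k ↔ 1 ≤ a ∧ a ≤ k + 1 ∨ a = 2 * m + 1 ∨ a = 2 * m + 2 := by
  simp only [basisIndices, Finset.mem_union, Finset.mem_Icc, Finset.mem_insert,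
    Finset.mem_singleton]

theorem span_image_basisIndices {R M : Type*} [CommRing R] [AddCommGroup M] [Module R M]
    {m k : ℕ} {X : ℕ → M} {idx : Fin (k + 3) → ℕ}
    (hidx : ∀ i : Fin (k + 3), idx i =
      if i.1 ≤ k then i.1 + 1 else if i.1 = k + 1 then 2 * m + 1 else 2 * m + 2)
    (hspan : Submodule.span R (Set.range fun i => X (idx i)) = ⊤) :
    Submodule.span R (X '' basisIndices m k) = ⊤ := by
  refine top_le_iff.1 (hspan ▸ Submodule.span_mono ?_)
  rintro _ ⟨i, rfl⟩
  refine ⟨idx i, ?_, rfl⟩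
  rw [Finset.mem_coe, mem_basisIndices, hidx i]
  split_ifs <;> omega

section Brackets

variable {R L : Type*} [CommRing R] [LieRing L] [LieAlgebra R L]

structure BracketRelations (m k : ℕ) (X : ℕ → L) : Prop where
  one_lie : ∀ j, 2 ≤ j → j ≤ k → ⁅X 1, X j⁆ = X (j + 1)
  two_lie_three : ⁅X 2, X 3⁆ = X (2 * m + 1)
  two_lie_four : ⁅X 2, X 4⁆ = X (2 * m + 2)
  one_lie_top : ⁅X 1, X (2 * m + 1)⁆ = X (2 * m + 2)
  lie_eq_zero : ∀ i j, i ∈ basisIndices m k → j ∈ basisIndices m k → i < j →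
    ¬(i = 1 ∧ 2 ≤ j ∧ j ≤ k) → ¬(i = 2 ∧ j = 3) → ¬(i = 2 ∧ j = 4) →
    ¬(i = 1 ∧ j = 2 * m + 1) → ⁅X i, X j⁆ = 0

structure IsGradingWeight (m k : ℕ) (w : ℕ → R) : Prop where
  one_add : ∀ j, 2 ≤ j → j ≤ k → w 1 + w j = w (j + 1)
  two_add_three : w 2 + w 3 = w (2 * m + 1)
  two_add_four : w 2 + w 4 = w (2 * m + 2)
  one_add_top : w 1 + w (2 * m + 1) = w (2 * m + 2)

namespace BracketRelations

variable {m k : ℕ} {X : ℕ → L} {w : ℕ → R} {t : L →ₗ[R] L}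

theorem map_lie_of_lt (hX : BracketRelations m k X) (hw : IsGradingWeight m k w)
    (ht : ∀ a ∈ basisIndices m k, t (X a) = w a • X a) {i j : ℕ}
    (hi : i ∈ basisIndices m k) (hj : j ∈ basisIndices m k) (hij : i < j) :
    t ⁅X i, X j⁆ = (w i + w j) • ⁅X i, X j⁆ := by
  by_cases c₁ : i = 1 ∧ 2 ≤ j ∧ j ≤ k
  · obtain ⟨rfl, hj₂, hjk⟩ := c₁
    rw [hX.one_lie j hj₂ hjk, hw.one_add j hj₂ hjk, ht _ (mem_basisIndices.2 (by omega))]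
  by_cases c₂ : i = 2 ∧ j = 3
  · obtain ⟨rfl, rfl⟩ := c₂
    rw [hX.two_lie_three, hw.two_add_three, ht _ (mem_basisIndices.2 (by omega))]
  by_cases c₃ : i = 2 ∧ j = 4
  · obtain ⟨rfl, rfl⟩ := c₃
    rw [hX.two_lie_four, hw.two_add_four, ht _ (mem_basisIndices.2 (by omega))]
  by_cases c₄ : i = 1 ∧ j = 2 * m + 1
  · obtain ⟨rfl, rfl⟩ := c₄
    rw [hX.one_lie_top, hw.one_add_top, ht _ (mem_basisIndices.2 (by omega))]
  rw [hX.lie_eq_zero i j hi hj hij c₁ c₂ c₃ c₄, map_zero, smul_zero]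

theorem map_lie (hX : BracketRelations m k X) (hw : IsGradingWeight m k w)
    (ht : ∀ a ∈ basisIndices m k, t (X a) = w a • X a) {i j : ℕ}
    (hi : i ∈ basisIndices m k) (hj : j ∈ basisIndices m k) :
    t ⁅X i, X j⁆ = (w i + w j) • ⁅X i, X j⁆ := by
  rcases lt_trichotomy i j with hij | rfl | hji
  · exact hX.map_lie_of_lt hw ht hi hj hij
  · simp
  · exact lie_eigenvector_swap (hX.map_lie_of_lt hw ht hj hi hji)

theorem leibniz (hX : BracketRelations m k X) (hw : IsGradingWeight m k w)
    (hspan : Submodule.span R (X '' basisIndices m k) = ⊤)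
    (ht : ∀ a ∈ basisIndices m k, t (X a) = w a • X a) (x y : L) :
    t ⁅x, y⁆ = ⁅t x, y⁆ + ⁅x, t y⁆ :=
  leibniz_of_span hspan t (by
    rintro _ ⟨i, hi, rfl⟩ _ ⟨j, hj, rfl⟩
    exact leibniz_of_eigenvector (ht i hi) (ht j hj) (hX.map_lie hw ht hi hj)) x y

end BracketRelations

end Brackets

section Weights

variable (R : Type*) [CommRing R]

def weight₁ (m k a : ℕ) : R :=
  if a = 1 then 1 else if a ≤ k + 1 then (k : R) - 3 + a else if a = 2 * m + 1 then 2 * k - 1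
  else 2 * k

def weight₂ (k a : ℕ) : R :=
  if a = 1 then 0 else if a ≤ k + 1 then 1 else 2

variable {R} {m k : ℕ}

theorem isGradingWeight_weight₁ (h3k : 3 ≤ k) (hkm : k < 2 * m) :
    IsGradingWeight m k (weight₁ R m k) := by
  constructor <;> intros <;> simp only [weight₁] <;> split_ifs <;>
    first | omega | (push_cast; ring)

theorem isGradingWeight_weight₂ (h3k : 3 ≤ k) (hkm : k < 2 * m) :
    IsGradingWeight m k (weight₂ R k) := by
  constructor <;> intros <;> simp only [weight₂] <;> split_ifs <;>
    first | omega | norm_num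

variable {M : Type*} [AddCommGroup M] [Module R M] {X : ℕ → M} {t : M →ₗ[R] M}

theorem map_eq_weight₁_smul (hkm : k < 2 * m) (h₁ : t (X 1) = X 1)
    (h₂ : t (X 2) = ((k : R) - 1) • X 2)
    (h₃ : ∀ j, 3 ≤ j → j ≤ k + 1 → t (X j) = ((k : R) - 3 + j) • X j)
    (h₄ : t (X (2 * m + 1)) = (2 * (k : R) - 1) • X (2 * m + 1))
    (h₅ : t (X (2 * m + 2)) = (2 * (k : R)) • X (2 * m + 2)) :
    ∀ a ∈ basisIndices m k, t (X a) = weight₁ R m k a • X a := by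
  intro a ha
  rcases mem_basisIndices.1 ha with ⟨h1a, hak⟩ | rfl | rfl
  · rcases (by omega : a = 1 ∨ a = 2 ∨ 3 ≤ a) with rfl | rfl | h3a
    · simp [weight₁, h₁]
    · rw [h₂, weight₁, if_neg (by omega), if_pos hak]
      congr 1
      push_cast
      ring
    · rw [h₃ a h3a hak, weight₁, if_neg (by omega), if_pos hak]
  · rw [h₄, weight₁, if_neg (by omega), if_neg (by omega), if_pos rfl]
  · rw [h₅, weight₁, if_neg (by omega), if_neg (by omega), if_neg (by omega)]

theorem map_eq_weight₂_smul (hkm : k < 2 * m) (h₁ : t (X 1) = 0)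
    (h₂ : ∀ j, 2 ≤ j → j ≤ k + 1 → t (X j) = X j)
    (h₃ : t (X (2 * m + 1)) = (2 : R) • X (2 * m + 1))
    (h₄ : t (X (2 * m + 2)) = (2 : R) • X (2 * m + 2)) :
    ∀ a ∈ basisIndices m k, t (X a) = weight₂ R k a • X a := by
  intro a ha
  rcases mem_basisIndices.1 ha with ⟨h1a, hak⟩ | rfl | rfl
  · rcases (by omega : a = 1 ∨ 2 ≤ a) with rfl | h2a
    · simp [weight₂, h₁]
    · rw [h₂ a h2a hak, weight₂, if_neg (by omega), if_pos hak, one_smul]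
  · rw [h₃, weight₂, if_neg (by omega), if_neg (by omega)]
  · rw [h₄, weight₂, if_neg (by omega), if_neg (by omega)]

end Weights

theorem stmt9_general (m k : ℕ) (hm : 4 ≤ m) (hmk : m ≤ k) (hk : k ≤ 2 * m - 2)
    (n : Type*) [LieRing n] [LieAlgebra ℂ n]
    (Xb : ℕ → n)
    (idx : Fin (k + 3) → ℕ)
    (hidx : ∀ i : Fin (k + 3), idx i =
      if i.1 ≤ k then i.1 + 1 else if i.1 = k + 1 then 2 * m + 1 else 2 * m + 2)
    (hspan : Submodule.span ℂ (Set.range (fun i : Fin (k + 3) => Xb (idx i))) = ⊤)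
    (h1 : ∀ j, 2 ≤ j → j ≤ k → ⁅Xb 1, Xb j⁆ = Xb (j + 1))
    (h3 : ⁅Xb 2, Xb 3⁆ = Xb (2 * m + 1))
    (h4 : ⁅Xb 2, Xb 4⁆ = Xb (2 * m + 2))
    (h5 : ⁅Xb 1, Xb (2 * m + 1)⁆ = Xb (2 * m + 2))
    (h0 : ∀ i j, i ∈ Finset.Icc 1 (k + 1) ∪ {2 * m + 1, 2 * m + 2} →
      j ∈ Finset.Icc 1 (k + 1) ∪ {2 * m + 1, 2 * m + 2} → i < j →
      ¬(i = 1 ∧ 2 ≤ j ∧ j ≤ k) → ¬(i = 2 ∧ j = 3) → ¬(i = 2 ∧ j = 4) →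
      ¬(i = 1 ∧ j = 2 * m + 1) → ⁅Xb i, Xb j⁆ = 0)
    (t₁ t₂ : n →ₗ[ℂ] n)
    (ht₁a : t₁ (Xb 1) = Xb 1)
    (ht₁b : t₁ (Xb 2) = ((k : ℂ) - 1) • Xb 2)
    (ht₁c : ∀ j, 3 ≤ j → j ≤ k + 1 → t₁ (Xb j) = ((k : ℂ) - 3 + j) • Xb j)
    (ht₁d : t₁ (Xb (2 * m + 1)) = (2 * (k : ℂ) - 1) • Xb (2 * m + 1))
    (ht₁e : t₁ (Xb (2 * m + 2)) = (2 * (k : ℂ)) • Xb (2 * m + 2))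
    (ht₂a : t₂ (Xb 1) = 0)
    (ht₂b : ∀ j, 2 ≤ j → j ≤ k + 1 → t₂ (Xb j) = Xb j)
    (ht₂c : t₂ (Xb (2 * m + 1)) = (2 : ℂ) • Xb (2 * m + 1))
    (ht₂d : t₂ (Xb (2 * m + 2)) = (2 : ℂ) • Xb (2 * m + 2)) :
    (∀ x y : n, t₁ ⁅x, y⁆ = ⁅t₁ x, y⁆ + ⁅x, t₁ y⁆) ∧
    (∀ x y : n, t₂ ⁅x, y⁆ = ⁅t₂ x, y⁆ + ⁅x, t₂ y⁆) ∧
    t₁ ∘ₗ t₂ = t₂ ∘ₗ t₁ := by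
  have hS := span_image_basisIndices hidx hspan
  have hX : BracketRelations m k Xb := ⟨h1, h3, h4, h5, h0⟩
  have e₁ := map_eq_weight₁_smul (by omega) ht₁a ht₁b ht₁c ht₁d ht₁e
  have e₂ := map_eq_weight₂_smul (by omega) ht₂a ht₂b ht₂c ht₂d
  refine ⟨hX.leibniz (isGradingWeight_weight₁ (by omega) (by omega)) hS e₁,
    hX.leibniz (isGradingWeight_weight₂ (by omega) (by omega)) hS e₂,
    LinearMap.comp_comm_of_eigenvectors hS ?_⟩
  rintro _ ⟨a, ha, rfl⟩
  exact ⟨_, _, e₁ a ha, e₂ a ha⟩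

/-- for `4 ≤ m ≤ k ≤ 2m-2`, the `(k+3)`-dimensional nilpotent Lie algebra
`n = g_m / C^k g_m`, with basis `X̄ 1, ..., X̄ (k+1), X̄ (2m+1), X̄ (2m+2)` and nonzero
brackets `[X̄ 1, X̄ j] = X̄ (j+1)` (`2 ≤ j ≤ k`), `[X̄ 2, X̄ 3] = X̄ (2m+1)`,
`[X̄ 2, X̄ 4] = X̄ (2m+2)`, `[X̄ 1, X̄ (2m+1)] = X̄ (2m+2)`, admits the two commuting
semisimple (diagonal) derivations `t₁`, `t₂` described by their eigenvalues on the
basis. -/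
theorem stmt9 (m k : ℕ) (hm : 4 ≤ m) (hmk : m ≤ k) (hk : k ≤ 2 * m - 2)
    (n : Type*) [LieRing n] [LieAlgebra ℂ n]
    (Xb : ℕ → n)
    (idx : Fin (k + 3) → ℕ)
    (hidx : ∀ i : Fin (k + 3), idx i =
      if i.1 ≤ k then i.1 + 1 else if i.1 = k + 1 then 2 * m + 1 else 2 * m + 2)
    (hindep : LinearIndependent ℂ (fun i : Fin (k + 3) => Xb (idx i)))
    (hspan : Submodule.span ℂ (Set.range (fun i : Fin (k + 3) => Xb (idx i))) = ⊤)
    (h1 : ∀ j, 2 ≤ j → j ≤ k → ⁅Xb 1, Xb j⁆ = Xb (j + 1))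
    (h3 : ⁅Xb 2, Xb 3⁆ = Xb (2 * m + 1))
    (h4 : ⁅Xb 2, Xb 4⁆ = Xb (2 * m + 2))
    (h5 : ⁅Xb 1, Xb (2 * m + 1)⁆ = Xb (2 * m + 2))
    (h0 : ∀ i j, i ∈ Finset.Icc 1 (k + 1) ∪ {2 * m + 1, 2 * m + 2} →
      j ∈ Finset.Icc 1 (k + 1) ∪ {2 * m + 1, 2 * m + 2} → i < j →
      ¬(i = 1 ∧ 2 ≤ j ∧ j ≤ k) → ¬(i = 2 ∧ j = 3) → ¬(i = 2 ∧ j = 4) →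
      ¬(i = 1 ∧ j = 2 * m + 1) → ⁅Xb i, Xb j⁆ = 0)
    (t₁ t₂ : n →ₗ[ℂ] n)
    (ht₁a : t₁ (Xb 1) = Xb 1)
    (ht₁b : t₁ (Xb 2) = ((k : ℂ) - 1) • Xb 2)
    (ht₁c : ∀ j, 3 ≤ j → j ≤ k + 1 → t₁ (Xb j) = ((k : ℂ) - 3 + j) • Xb j)
    (ht₁d : t₁ (Xb (2 * m + 1)) = (2 * (k : ℂ) - 1) • Xb (2 * m + 1))
    (ht₁e : t₁ (Xb (2 * m + 2)) = (2 * (k : ℂ)) • Xb (2 * m + 2))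
    (ht₂a : t₂ (Xb 1) = 0)
    (ht₂b : ∀ j, 2 ≤ j → j ≤ k + 1 → t₂ (Xb j) = Xb j)
    (ht₂c : t₂ (Xb (2 * m + 1)) = (2 : ℂ) • Xb (2 * m + 1))
    (ht₂d : t₂ (Xb (2 * m + 2)) = (2 : ℂ) • Xb (2 * m + 2)) :
    (∀ x y : n, t₁ ⁅x, y⁆ = ⁅t₁ x, y⁆ + ⁅x, t₁ y⁆) ∧
    (∀ x y : n, t₂ ⁅x, y⁆ = ⁅t₂ x, y⁆ + ⁅x, t₂ y⁆) ∧
    t₁ ∘ₗ t₂ = t₂ ∘ₗ t₁ :=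
  stmt9_general m k hm hmk hk n Xb idx hidx hspan h1 h3 h4 h5 h0 t₁ t₂ ht₁a ht₁b ht₁c ht₁d ht₁e ht₂a
    ht₂b ht₂c ht₂d
end

section
/- With g₀ⁿ as above, for each 1 ≤ k ≤ n−6 the alternating bilinear map φ_{1,k} defined by φ_{1,k}(X₅, X₂) = φ_{1,k}(X₃, X₄) = Y_k (zero otherwise on basis pairs) is a 2-cocycle in Z²(g₀ⁿ, g₀ⁿ); similarly φ_{3,k} defined by φ_{3,k}(X₃, X₂) = Y_k is a 2-cocycle. -/
/-
`g₀ⁿ` is spanned by `X₁` together with the abelian ideal spanned by `X₂, …, Xₙ`, and both maps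
take values in the centre. For such data the cocycle identity on basis triples reduces to the
symmetry of the form `(u, v) ↦ φ(u, [X₁, v])` on the abelian part, which for `φ_{1,k}` and
`φ_{3,k}` is a finite check on `X₂, …, X₅`. Since the cocycle sum is cyclic and linear in its
first slot, it then vanishes everywhere.
-/

open Submodule

section Cyclic

variable {R M N : Type*} [CommSemiring R] [AddCommMonoid M] [Module R M] [AddCommMonoid N]
  [Module R N]

theorem IsLinearMap.eq_zero_of_span_eq_top {f : M → N} (hf : IsLinearMap R f) {s : Set M}
    (hs : span R s = ⊤) (h : ∀ x ∈ s, f x = 0) (x : M) : f x = 0 :=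
  LinearMap.congr_fun (LinearMap.ext_on hs (f := hf.mk' f) (g := 0) h) x

theorem eq_zero_of_cyclic_of_span_eq_top {E : M → M → M → N}
    (hlin : ∀ y z, IsLinearMap R (E · y z)) (hcyc : ∀ x y z, E x y z = E y z x)
    {s : Set M} (hs : span R s = ⊤) (h : ∀ x ∈ s, ∀ y ∈ s, ∀ z ∈ s, E x y z = 0)
    (x y z : M) : E x y z = 0 := by
  have h₁ : ∀ x, ∀ y ∈ s, ∀ z ∈ s, E x y z = 0 := fun x y hy z hz =>
    (hlin y z).eq_zero_of_span_eq_top hs (fun x hx => h x hx y hy z hz) x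
  have h₂ : ∀ x y, ∀ z ∈ s, E x y z = 0 := fun x y z hz => by
    rw [hcyc]
    exact (hlin z x).eq_zero_of_span_eq_top hs (fun y hy => (hcyc x y z) ▸ h₁ x y hy z hz) y
  rw [hcyc, hcyc]
  exact (hlin x y).eq_zero_of_span_eq_top hs
    (fun z hz => (hcyc z x y).symm ▸ h₂ x y z hz) z

end Cyclic

namespace LieAlgebra

variable {R L : Type*} [CommRing R] [LieRing L] [LieAlgebra R L]

/-- For alternating `φ` this is the Chevalley–Eilenberg differential `(dφ)(x, y, z)` with
adjoint coefficients. -/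
def cocycleSum (φ : L →ₗ[R] L →ₗ[R] L) (x y z : L) : L :=
  ⁅x, φ y z⁆ + ⁅z, φ x y⁆ + ⁅y, φ z x⁆ + φ x ⁅y, z⁆ + φ z ⁅x, y⁆ + φ y ⁅z, x⁆

variable (φ : L →ₗ[R] L →ₗ[R] L)

theorem cocycleSum_cycle (x y z : L) : cocycleSum φ x y z = cocycleSum φ y z x := by
  simp only [cocycleSum]
  abel

theorem isLinearMap_cocycleSum (y z : L) : IsLinearMap R (cocycleSum φ · y z) where
  map_add x x' := by
    simp only [cocycleSum, map_add, add_lie, lie_add, LinearMap.add_apply]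
    abel
  map_smul c x := by
    simp only [cocycleSum, map_smul, smul_lie, lie_smul, LinearMap.smul_apply, smul_add]

theorem cocycleSum_eq_zero_of_abelian_complement {ι : Type*} {b : ι → L}
    (hb : span R (Set.range b) = ⊤) (i₀ : ι)
    (hcomm : ∀ i j, i ≠ i₀ → j ≠ i₀ → ⁅b i, b j⁆ = 0)
    (hcent : ∀ i j k, ⁅b i, φ (b j) (b k)⁆ = 0)
    (hsymm : ∀ i j, i ≠ i₀ → j ≠ i₀ → φ (b i) ⁅b i₀, b j⁆ = φ (b j) ⁅b i₀, b i⁆)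
    (x y z : L) : cocycleSum φ x y z = 0 := by
  have first : ∀ j k, cocycleSum φ (b i₀) (b j) (b k) = 0 := by
    intro j k
    simp only [cocycleSum, hcent, zero_add]
    by_cases hj : j = i₀
    · rw [hj, lie_self, ← lie_skew (b k) (b i₀)]
      simp only [map_zero, map_neg]
      abel
    by_cases hk : k = i₀
    · rw [hk, lie_self, ← lie_skew (b i₀) (b j)]
      simp only [map_zero, map_neg]
      abel
    rw [hcomm j k hj hk, ← lie_skew (b k) (b i₀), map_neg, hsymm j k hj hk]
    simp only [map_zero]
    abel
  have basis : ∀ i j k, cocycleSum φ (b i) (b j) (b k) = 0 := by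
    intro i j k
    by_cases hi : i = i₀
    · exact hi ▸ first j k
    by_cases hj : j = i₀
    · rw [cocycleSum_cycle, hj]
      exact first k i
    by_cases hk : k = i₀
    · rw [hk, ← cocycleSum_cycle]
      exact first i j
    simp only [cocycleSum, hcent, hcomm _ _ hi hj, hcomm _ _ hj hk, hcomm _ _ hk hi, map_zero,
      add_zero]
  refine eq_zero_of_cyclic_of_span_eq_top (isLinearMap_cocycleSum φ) (cocycleSum_cycle φ) hb ?_
    x y z
  rintro _ ⟨i, rfl⟩ _ ⟨j, rfl⟩ _ ⟨k, rfl⟩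
  exact basis i j k

end LieAlgebra

open LieAlgebra

section FiliformG0

variable {R L : Type*} [CommRing R] [LieRing L] [LieAlgebra R L] {n : ℕ} {e : ℕ → L}

theorem lie_eq_zero_of_not_generator
    (hbr0 : ∀ i j, 1 ≤ i → i < j → j ≤ n → ¬(i = 1 ∧ 2 ≤ j ∧ j ≤ 5) → ⁅e i, e j⁆ = 0)
    {i j : ℕ} (hi : 1 ≤ i) (hin : i ≤ n) (hj : 1 ≤ j) (hjn : j ≤ n)
    (hij : ¬(i = 1 ∧ 2 ≤ j ∧ j ≤ 5)) (hji : ¬(j = 1 ∧ 2 ≤ i ∧ i ≤ 5)) : ⁅e i, e j⁆ = 0 := by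
  rcases lt_trichotomy i j with h | rfl | h
  · exact hbr0 i j hi h hjn hij
  · exact lie_self _
  · rw [← lie_skew, hbr0 j i hj h hin hji, neg_zero]

theorem apply_lie_one_comm (hbr : ∀ j, 2 ≤ j → j ≤ 5 → ⁅e 1, e j⁆ = e (j + 1))
    (hbr0 : ∀ i j, 1 ≤ i → i < j → j ≤ n → ¬(i = 1 ∧ 2 ≤ j ∧ j ≤ 5) → ⁅e i, e j⁆ = 0)
    {φ : L →ₗ[R] L →ₗ[R] L}
    (hvanish : ∀ i j, 1 ≤ i → i ≤ n → 1 ≤ j → j ≤ n → (6 ≤ i ∨ 6 ≤ j) → φ (e i) (e j) = 0)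
    (hsmall : ∀ b c, 2 ≤ b → b ≤ 5 → 2 ≤ c → c ≤ 5 → φ (e b) (e (c + 1)) = φ (e c) (e (b + 1)))
    {b c : ℕ} (hb : 2 ≤ b) (hbn : b ≤ n) (hc : 2 ≤ c) (hcn : c ≤ n) :
    φ (e b) ⁅e 1, e c⁆ = φ (e c) ⁅e 1, e b⁆ := by
  have ad_one_eq_zero {j : ℕ} (hj : 6 ≤ j) (hjn : j ≤ n) : ⁅e 1, e j⁆ = 0 :=
    lie_eq_zero_of_not_generator hbr0 le_rfl (by omega) (by omega) hjn (by omega) (by omega)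
  rcases le_or_gt c 5 with hc5 | hc5 <;> rcases le_or_gt b 5 with hb5 | hb5
  · rw [hbr c hc hc5, hbr b hb hb5]
    exact hsmall b c hb hb5 hc hc5
  · rw [hbr c hc hc5, ad_one_eq_zero hb5 hbn, map_zero]
    exact hvanish b (c + 1) (by omega) hbn (by omega) (by omega) (Or.inl hb5)
  · rw [hbr b hb hb5, ad_one_eq_zero hc5 hcn, map_zero]
    exact (hvanish c (b + 1) (by omega) hcn (by omega) (by omega) (Or.inl hc5)).symm
  · rw [ad_one_eq_zero hb5 hbn, ad_one_eq_zero hc5 hcn, map_zero, map_zero]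

theorem cocycleSum_eq_zero_of_g0 {m : ℕ} (hm : 6 ≤ m) (hmn : m ≤ n)
    (hspan : span R (Set.range (fun i : Fin n => e (i.1 + 1))) = ⊤)
    (hbr : ∀ j, 2 ≤ j → j ≤ 5 → ⁅e 1, e j⁆ = e (j + 1))
    (hbr0 : ∀ i j, 1 ≤ i → i < j → j ≤ n → ¬(i = 1 ∧ 2 ≤ j ∧ j ≤ 5) → ⁅e i, e j⁆ = 0)
    {φ : L →ₗ[R] L →ₗ[R] L}
    (hmem : ∀ i j, 1 ≤ i → i ≤ n → 1 ≤ j → j ≤ n → φ (e i) (e j) ∈ R ∙ e m)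
    (hvanish : ∀ i j, 1 ≤ i → i ≤ n → 1 ≤ j → j ≤ n → (6 ≤ i ∨ 6 ≤ j) → φ (e i) (e j) = 0)
    (hsmall : ∀ b c, 2 ≤ b → b ≤ 5 → 2 ≤ c → c ≤ 5 → φ (e b) (e (c + 1)) = φ (e c) (e (b + 1)))
    (x y z : L) : cocycleSum φ x y z = 0 := by
  refine cocycleSum_eq_zero_of_abelian_complement φ hspan ⟨0, by omega⟩ ?_ ?_ ?_ x y z
  · intro i j hi hj
    simp only [ne_eq, Fin.ext_iff] at hi hj
    exact lie_eq_zero_of_not_generator hbr0 (by omega) i.2 (by omega) j.2 (by omega) (by omega)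
  · intro i j k
    obtain ⟨a, ha⟩ := mem_span_singleton.mp (hmem _ _ (by omega) j.2 (by omega) k.2)
    rw [← ha, lie_smul,
      lie_eq_zero_of_not_generator hbr0 (by omega) i.2 (by omega) hmn (by omega) (by omega),
      smul_zero]
  · intro i j hi hj
    simp only [ne_eq, Fin.ext_iff] at hi hj
    exact apply_lie_one_comm hbr hbr0 hvanish hsmall (by omega) i.2 (by omega) j.2

theorem cocycleSum_phiOne_eq_zero
    (hspan : span R (Set.range (fun i : Fin n => e (i.1 + 1))) = ⊤)
    (hbr : ∀ j, 2 ≤ j → j ≤ 5 → ⁅e 1, e j⁆ = e (j + 1))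
    (hbr0 : ∀ i j, 1 ≤ i → i < j → j ≤ n → ¬(i = 1 ∧ 2 ≤ j ∧ j ≤ 5) → ⁅e i, e j⁆ = 0)
    {k : ℕ} (hk : 1 ≤ k) (hkn : k ≤ n - 6) {φ : L →ₗ[R] L →ₗ[R] L} (halt : φ.IsAlt)
    (h52 : φ (e 5) (e 2) = e (6 + k)) (h34 : φ (e 3) (e 4) = e (6 + k))
    (h0 : ∀ i j, 1 ≤ i → 1 ≤ j → i ≤ n → j ≤ n →
      ¬((i = 5 ∧ j = 2) ∨ (i = 2 ∧ j = 5) ∨ (i = 3 ∧ j = 4) ∨ (i = 4 ∧ j = 3)) →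
      φ (e i) (e j) = 0)
    (x y z : L) : cocycleSum φ x y z = 0 := by
  have h25 : φ (e 2) (e 5) = -e (6 + k) := by rw [← halt.neg, h52]
  have h43 : φ (e 4) (e 3) = -e (6 + k) := by rw [← halt.neg, h34]
  refine cocycleSum_eq_zero_of_g0 (m := 6 + k) (by omega) (by omega) hspan hbr hbr0 ?_
    (fun i j hi hin hj hjn _ => h0 i j hi hj hin hjn (by omega)) ?_ x y z
  · intro i j hi hin hj hjn
    by_cases h : (i = 5 ∧ j = 2) ∨ (i = 2 ∧ j = 5) ∨ (i = 3 ∧ j = 4) ∨ (i = 4 ∧ j = 3)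
    · rcases h with ⟨rfl, rfl⟩ | ⟨rfl, rfl⟩ | ⟨rfl, rfl⟩ | ⟨rfl, rfl⟩ <;>
        simp [h52, h25, h34, h43, mem_span_singleton_self]
    · rw [h0 i j hi hj hin hjn h]
      exact zero_mem _
  · have h0' : ∀ i j, 1 ≤ i → i ≤ 6 → 1 ≤ j → j ≤ 6 →
        ¬((i = 5 ∧ j = 2) ∨ (i = 2 ∧ j = 5) ∨ (i = 3 ∧ j = 4) ∨ (i = 4 ∧ j = 3)) →
        φ (e i) (e j) = 0 :=
      fun i j hi hi6 hj hj6 => h0 i j hi hj (by omega) (by omega)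
    intro b c hb hb5 hc hc5
    -- the only instance with nonzero sides is `φ(X₂, X₅) = -Y = φ(X₄, X₃)`
    interval_cases b <;> interval_cases c <;> simp [h0', h25, h43]

theorem cocycleSum_phiThree_eq_zero
    (hspan : span R (Set.range (fun i : Fin n => e (i.1 + 1))) = ⊤)
    (hbr : ∀ j, 2 ≤ j → j ≤ 5 → ⁅e 1, e j⁆ = e (j + 1))
    (hbr0 : ∀ i j, 1 ≤ i → i < j → j ≤ n → ¬(i = 1 ∧ 2 ≤ j ∧ j ≤ 5) → ⁅e i, e j⁆ = 0)
    {k : ℕ} (hk : 1 ≤ k) (hkn : k ≤ n - 6) {φ : L →ₗ[R] L →ₗ[R] L} (halt : φ.IsAlt)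
    (h32 : φ (e 3) (e 2) = e (6 + k))
    (h0 : ∀ i j, 1 ≤ i → 1 ≤ j → i ≤ n → j ≤ n → ¬((i = 3 ∧ j = 2) ∨ (i = 2 ∧ j = 3)) →
      φ (e i) (e j) = 0)
    (x y z : L) : cocycleSum φ x y z = 0 := by
  have h23 : φ (e 2) (e 3) = -e (6 + k) := by rw [← halt.neg, h32]
  refine cocycleSum_eq_zero_of_g0 (m := 6 + k) (by omega) (by omega) hspan hbr hbr0 ?_
    (fun i j hi hin hj hjn _ => h0 i j hi hj hin hjn (by omega)) ?_ x y z
  · intro i j hi hin hj hjn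
    by_cases h : (i = 3 ∧ j = 2) ∨ (i = 2 ∧ j = 3)
    · rcases h with ⟨rfl, rfl⟩ | ⟨rfl, rfl⟩ <;> simp [h32, h23, mem_span_singleton_self]
    · rw [h0 i j hi hj hin hjn h]
      exact zero_mem _
  · have h0' : ∀ i j, 1 ≤ i → i ≤ 6 → 1 ≤ j → j ≤ 6 → ¬((i = 3 ∧ j = 2) ∨ (i = 2 ∧ j = 3)) →
        φ (e i) (e j) = 0 :=
      fun i j hi hi6 hj hj6 => h0 i j hi hj (by omega) (by omega)
    intro b c hb hb5 hc hc5
    interval_cases b <;> interval_cases c <;> simp [h0', h23]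

end FiliformG0

theorem stmt11_general (n : ℕ) (g : Type*) [LieRing g] [LieAlgebra ℂ g]
    (e : ℕ → g)
    (hspan : Submodule.span ℂ (Set.range (fun i : Fin n => e (i.1 + 1))) = ⊤)
    (hbr : ∀ j, 2 ≤ j → j ≤ 5 → ⁅e 1, e j⁆ = e (j + 1))
    (hbr0 : ∀ i j, 1 ≤ i → i < j → j ≤ n → ¬(i = 1 ∧ 2 ≤ j ∧ j ≤ 5) → ⁅e i, e j⁆ = 0) :
    (∀ k, 1 ≤ k → k ≤ n - 6 → ∀ φ : g →ₗ[ℂ] g →ₗ[ℂ] g,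
      (∀ x : g, φ x x = 0) →
      φ (e 5) (e 2) = e (6 + k) →
      φ (e 3) (e 4) = e (6 + k) →
      (∀ i j, 1 ≤ i → 1 ≤ j → i ≤ n → j ≤ n →
        ¬((i = 5 ∧ j = 2) ∨ (i = 2 ∧ j = 5) ∨ (i = 3 ∧ j = 4) ∨ (i = 4 ∧ j = 3)) →
        φ (e i) (e j) = 0) →
      ∀ x y z : g,
        ⁅x, φ y z⁆ + ⁅z, φ x y⁆ + ⁅y, φ z x⁆ +
          φ x ⁅y, z⁆ + φ z ⁅x, y⁆ + φ y ⁅z, x⁆ = 0) ∧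
    (∀ k, 1 ≤ k → k ≤ n - 6 → ∀ φ : g →ₗ[ℂ] g →ₗ[ℂ] g,
      (∀ x : g, φ x x = 0) →
      φ (e 3) (e 2) = e (6 + k) →
      (∀ i j, 1 ≤ i → 1 ≤ j → i ≤ n → j ≤ n →
        ¬((i = 3 ∧ j = 2) ∨ (i = 2 ∧ j = 3)) →
        φ (e i) (e j) = 0) →
      ∀ x y z : g,
        ⁅x, φ y z⁆ + ⁅z, φ x y⁆ + ⁅y, φ z x⁆ +
          φ x ⁅y, z⁆ + φ z ⁅x, y⁆ + φ y ⁅z, x⁆ = 0) :=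
  ⟨fun _ hk hkn _ halt h52 h34 h0 =>
    cocycleSum_phiOne_eq_zero hspan hbr hbr0 hk hkn halt h52 h34 h0,
   fun _ hk hkn _ halt h32 h0 => cocycleSum_phiThree_eq_zero hspan hbr hbr0 hk hkn halt h32 h0⟩

/-- with `g₀ⁿ` as in Statement 10 (basis `e 1, ..., e n`,
`Y_k = e (6+k)`), for each `1 ≤ k ≤ n-6` the alternating bilinear map `φ_{1,k}` with
`φ_{1,k} (X₅, X₂) = φ_{1,k} (X₃, X₄) = Y_k` (zero on the other basis pairs) is a
`2`-cocycle with adjoint coefficients, and likewise the map `φ_{3,k}` with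
`φ_{3,k} (X₃, X₂) = Y_k` is a `2`-cocycle. -/
theorem stmt11 (n : ℕ) (hn : 7 ≤ n) (g : Type*) [LieRing g] [LieAlgebra ℂ g]
    (e : ℕ → g)
    (hindep : LinearIndependent ℂ (fun i : Fin n => e (i.1 + 1)))
    (hspan : Submodule.span ℂ (Set.range (fun i : Fin n => e (i.1 + 1))) = ⊤)
    (hbr : ∀ j, 2 ≤ j → j ≤ 5 → ⁅e 1, e j⁆ = e (j + 1))
    (hbr0 : ∀ i j, 1 ≤ i → i < j → j ≤ n → ¬(i = 1 ∧ 2 ≤ j ∧ j ≤ 5) → ⁅e i, e j⁆ = 0) :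
    (∀ k, 1 ≤ k → k ≤ n - 6 → ∀ φ : g →ₗ[ℂ] g →ₗ[ℂ] g,
      (∀ x : g, φ x x = 0) →
      φ (e 5) (e 2) = e (6 + k) →
      φ (e 3) (e 4) = e (6 + k) →
      (∀ i j, 1 ≤ i → 1 ≤ j → i ≤ n → j ≤ n →
        ¬((i = 5 ∧ j = 2) ∨ (i = 2 ∧ j = 5) ∨ (i = 3 ∧ j = 4) ∨ (i = 4 ∧ j = 3)) →
        φ (e i) (e j) = 0) →
      ∀ x y z : g,
        ⁅x, φ y z⁆ + ⁅z, φ x y⁆ + ⁅y, φ z x⁆ +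
          φ x ⁅y, z⁆ + φ z ⁅x, y⁆ + φ y ⁅z, x⁆ = 0) ∧
    (∀ k, 1 ≤ k → k ≤ n - 6 → ∀ φ : g →ₗ[ℂ] g →ₗ[ℂ] g,
      (∀ x : g, φ x x = 0) →
      φ (e 3) (e 2) = e (6 + k) →
      (∀ i j, 1 ≤ i → 1 ≤ j → i ≤ n → j ≤ n →
        ¬((i = 3 ∧ j = 2) ∨ (i = 2 ∧ j = 3)) →
        φ (e i) (e j) = 0) →
      ∀ x y z : g,
        ⁅x, φ y z⁆ + ⁅z, φ x y⁆ + ⁅y, φ z x⁆ +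
          φ x ⁅y, z⁆ + φ z ⁅x, y⁆ + φ y ⁅z, x⁆ = 0) :=
  stmt11_general n g e hspan hbr hbr0
end

section
/- With g₀ⁿ as above, for 1 ≤ i < j ≤ n−6 the map ψ¹_{i,j} with ψ¹_{i,j}(Y_i, Y_j) = X₆ (zero otherwise), and for j ∈ {2,3,4} and 1 ≤ i ≤ n−6 the maps ψ_i^j with ψ_i^j(Y_i, X_l) = X_{l+j} for 2 ≤ l ≤ 6−j (zero otherwise), are 2-cocycles in Z²(g₀ⁿ, g₀ⁿ); moreover g₀ⁿ + φ_{1,1} + φ_{3,2} + ψ₂³ + Σ_{t=2}^{m−3} ψ¹_{2t−1,2t} (for n = 2m, m ≥ 5) satisfies the Jacobi identity, i.e. defines a Lie algebra law. -/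
/-!
Each identity is an alternating trilinear expression, so it suffices to check it on increasing
triples `e a, e b, e c` of basis vectors. For `ψ¹_{i,j}` every term vanishes: its values are
multiples of the central vector `X₆`, and it kills the derived algebra `span {X₃, …, X₆}`. For
`ψ_i^j` only the triples `(X₁, X_b, Y_i)` contribute, and there the identity says that
`ψ_i^j (Y_i, ·)`, which is `(ad X₁)^j` on the basis, commutes with `ad X₁`. For the deformed law,
brackets with some `Y_k`, `k ≥ 3`, lie in the centre `span {X₆}`, and these `Y_k` kill everything
the law produces; so only triples of vectors among `X₁, …, X₆, Y₁, Y₂` remain, and those are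
checked by computation.
-/

open Submodule Set LieModule.Cohomology

section Reduction

variable {R M N ι : Type*} [CommSemiring R] [AddCommMonoid M] [Module R M]
  [AddCommMonoid N] [Module R N] {v : ι → M}

theorem IsLinearMap.eq_zero_of_span_range_eq_top (hv : span R (range v) = ⊤) {f : M → N}
    (hf : IsLinearMap R f) (h : ∀ i, f (v i) = 0) (x : M) : f x = 0 :=
  LinearMap.congr_fun (LinearMap.ext_on_range hv (f := hf.mk' f) (g := 0) h) x

theorem eq_zero_of_cyclic_of_span_range_eq_top (hv : span R (range v) = ⊤)
    {T : M → M → M → N} (hlin : ∀ y z, IsLinearMap R (T · y z))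
    (hcyc : ∀ x y z, T x y z = T y z x) (h : ∀ i j k, T (v i) (v j) (v k) = 0) (x y z : M) :
    T x y z = 0 := by
  refine (hlin y z).eq_zero_of_span_range_eq_top hv (fun i => ?_) x
  rw [hcyc]
  refine (hlin z (v i)).eq_zero_of_span_range_eq_top hv (fun j => ?_) y
  rw [hcyc]
  exact (hlin (v i) (v j)).eq_zero_of_span_range_eq_top hv (fun k => h k i j) z

end Reduction

section AlternatingReduction

variable {R M N ι : Type*} [CommSemiring R] [AddCommMonoid M] [Module R M]
  [AddCommGroup N] [Module R N] {v : ι → M}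

theorem eq_zero_of_alternating_of_span_range_eq_top [LinearOrder ι] (hv : span R (range v) = ⊤)
    {T : M → M → M → N} (hlin : ∀ y z, IsLinearMap R (T · y z))
    (hcyc : ∀ x y z, T x y z = T y z x) (halt : ∀ x z, T x x z = 0)
    (h : ∀ i j k, i < j → j < k → T (v i) (v j) (v k) = 0) (x y z : M) : T x y z = 0 := by
  have hadd : ∀ x y y' z, T x (y + y') z = T x y z + T x y' z := fun x y y' z => by
    rw [hcyc x, (hlin z x).map_add, ← hcyc x y, ← hcyc x y']
  have hswap : ∀ x y z, T y x z = -T x y z := fun x y z => by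
    have h0 := halt (x + y) z
    rw [(hlin _ z).map_add, hadd, hadd, halt, halt, zero_add, add_zero] at h0
    exact eq_neg_of_add_eq_zero_right h0
  refine eq_zero_of_cyclic_of_span_range_eq_top hv hlin hcyc (fun i j k => ?_) x y z
  rcases lt_trichotomy i j with hij | rfl | hji
  · rcases lt_trichotomy j k with hjk | rfl | hkj
    · exact h i j k hij hjk
    · rw [hcyc, halt]
    · rcases lt_trichotomy i k with hik | rfl | hki
      · rw [hswap (v j), hcyc (v j), h i k j hik hkj, neg_zero]
      · rw [hcyc, hcyc, halt]
      · rw [hcyc, hcyc]; exact h k i j hki hij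
  · exact halt _ _
  · rcases lt_trichotomy i k with hik | rfl | hki
    · rw [hswap (v j), h j i k hji hik, neg_zero]
    · rw [hcyc, hcyc, halt]
    · rcases lt_trichotomy j k with hjk | rfl | hkj
      · rw [hcyc]; exact h j k i hjk hki
      · rw [hcyc, halt]
      · rw [hswap (v j), hcyc (v j), hcyc (v i), h k j i hkj hji, neg_zero]

end AlternatingReduction

section Cocycle

variable {R L : Type*} [CommRing R] [LieRing L] [LieAlgebra R L]

theorem d₂₃_cyclic (a : twoCochain R L L) (x y z : L) :
    d₂₃ R L L a x y z = d₂₃ R L L a y z x := by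
  simp only [d₂₃_apply, ← twoCochain_skew a z x, ← twoCochain_skew a y x, ← lie_skew y x,
    ← lie_skew z x, map_neg, LinearMap.neg_apply, lie_neg]
  abel

theorem d₂₃_self (a : twoCochain R L L) (x z : L) : d₂₃ R L L a x x z = 0 := by
  simp

theorem mem_twoCocycle_of_span_range_eq_top {ι : Type*} [LinearOrder ι] {v : ι → L}
    (hv : span R (range v) = ⊤) {a : twoCochain R L L}
    (h : ∀ i j k, i < j → j < k → d₂₃ R L L a (v i) (v j) (v k) = 0) :
    a ∈ twoCocycle R L L := by
  rw [mem_twoCocycle_iff]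
  ext x y z
  exact eq_zero_of_alternating_of_span_range_eq_top hv (T := fun x y z => d₂₃ R L L a x y z)
    (fun y z => ⟨fun x x' => by simp, fun c x => by simp⟩) (d₂₃_cyclic a) (d₂₃_self a) h x y z

theorem cocycle_identity_of_mem_twoCocycle {a : twoCochain R L L} (ha : a ∈ twoCocycle R L L)
    (x y z : L) :
    ⁅x, a y z⁆ + ⁅z, a x y⁆ + ⁅y, a z x⁆ + a x ⁅y, z⁆ + a z ⁅x, y⁆ + a y ⁅z, x⁆ = 0 := by
  have h : d₂₃ R L L a x y z = 0 := by rw [(mem_twoCocycle_iff R L L a).1 ha]; rfl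
  rw [← h, d₂₃_apply, ← twoCochain_skew a z x, ← twoCochain_skew a z ⁅x, y⁆,
    ← twoCochain_skew a y ⁅x, z⁆, ← twoCochain_skew a x ⁅y, z⁆, ← lie_skew x z, map_neg, lie_neg]
  abel

end Cocycle

section Jacobiator

variable {R M : Type*} [CommSemiring R] [AddCommGroup M] [Module R M] (μ : M →ₗ[R] M →ₗ[R] M)

def jacobiator (x y z : M) : M := μ x (μ y z) + μ z (μ x y) + μ y (μ z x)

theorem jacobiator_cyclic (x y z : M) : jacobiator μ x y z = jacobiator μ y z x := by
  unfold jacobiator; abel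

theorem isLinearMap_jacobiator (y z : M) : IsLinearMap R (jacobiator μ · y z) :=
  ⟨fun x x' => by simp only [jacobiator, map_add, LinearMap.add_apply]; abel,
    fun c x => by simp only [jacobiator, map_smul, LinearMap.smul_apply, smul_add]⟩

theorem jacobiator_self {μ : M →ₗ[R] M →ₗ[R] M} (hμ : μ.IsAlt) (x z : M) :
    jacobiator μ x x z = 0 := by
  rw [jacobiator, hμ, map_zero, add_zero, ← hμ.neg x z, map_neg, add_neg_cancel]

end Jacobiator

theorem LinearMap.eq_zero_of_mem_span {R M N : Type*} [Semiring R] [AddCommMonoid M] [Module R M]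
    [AddCommMonoid N] [Module R N] {f : M →ₗ[R] N} {s : Set M} (h : ∀ y ∈ s, f y = 0) {x : M}
    (hx : x ∈ span R s) : f x = 0 :=
  LinearMap.eqOn_span (g := 0) h hx

/-- `e 1, …, e 6` play the role of `X₁, …, X₆` and `e (6 + k)` that of `Y_k`. -/
structure IsG0Family (R : Type*) {L : Type*} [CommRing R] [LieRing L] [LieAlgebra R L] (n : ℕ)
    (e : ℕ → L) : Prop where
  span_eq_top : span R (range fun i : Fin n => e (i.1 + 1)) = ⊤
  lie_one_left : ∀ j, 2 ≤ j → j ≤ 5 → ⁅e 1, e j⁆ = e (j + 1)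
  lie_eq_zero_of_lt : ∀ i j, 1 ≤ i → i < j → j ≤ n → ¬(i = 1 ∧ 2 ≤ j ∧ j ≤ 5) → ⁅e i, e j⁆ = 0

namespace IsG0Family

variable {R L : Type*} [CommRing R] [LieRing L] [LieAlgebra R L] {n : ℕ} {e : ℕ → L}

theorem lie_one_right (hg : IsG0Family R n e) {a : ℕ} (h2 : 2 ≤ a) (h5 : a ≤ 5) :
    ⁅e a, e 1⁆ = -e (a + 1) := by
  rw [← lie_skew, hg.lie_one_left a h2 h5]

theorem lie_eq_zero (hg : IsG0Family R n e) {a b : ℕ} (ha : 1 ≤ a) (han : a ≤ n) (hb : 1 ≤ b)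
    (hbn : b ≤ n) (hab : ¬(a = 1 ∧ 2 ≤ b ∧ b ≤ 5)) (hba : ¬(b = 1 ∧ 2 ≤ a ∧ a ≤ 5)) :
    ⁅e a, e b⁆ = 0 := by
  rcases lt_trichotomy a b with h | rfl | h
  · exact hg.lie_eq_zero_of_lt a b ha h hbn hab
  · exact lie_self _
  · rw [← lie_skew, hg.lie_eq_zero_of_lt b a hb h han hba, neg_zero]

theorem lie_mem_span (hg : IsG0Family R n e) {a b : ℕ} (ha : 1 ≤ a) (han : a ≤ n) (hb : 1 ≤ b)
    (hbn : b ≤ n) : ⁅e a, e b⁆ ∈ span R (e '' Icc 3 6) := by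
  by_cases hab : a = 1 ∧ 2 ≤ b ∧ b ≤ 5
  · obtain ⟨rfl, h2, h5⟩ := hab
    rw [hg.lie_one_left b h2 h5]
    exact subset_span ⟨b + 1, ⟨by omega, by omega⟩, rfl⟩
  by_cases hba : b = 1 ∧ 2 ≤ a ∧ a ≤ 5
  · obtain ⟨rfl, h2, h5⟩ := hba
    rw [hg.lie_one_right h2 h5]
    exact neg_mem (subset_span ⟨a + 1, ⟨by omega, by omega⟩, rfl⟩)
  rw [hg.lie_eq_zero ha han hb hbn hab hba]
  exact zero_mem _

theorem eq_zero_of_alternating (hg : IsG0Family R n e) {N : Type*} [AddCommGroup N] [Module R N]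
    {T : L → L → L → N} (hlin : ∀ y z, IsLinearMap R (T · y z))
    (hcyc : ∀ x y z, T x y z = T y z x) (halt : ∀ x z, T x x z = 0)
    (h : ∀ a b c, 1 ≤ a → a < b → b < c → c ≤ n → T (e a) (e b) (e c) = 0) (x y z : L) :
    T x y z = 0 :=
  eq_zero_of_alternating_of_span_range_eq_top hg.span_eq_top hlin hcyc halt
    (fun i j k hij hjk => h _ _ _ (by omega) (by omega) (by omega) (by omega)) x y z

theorem mem_twoCocycle (hg : IsG0Family R n e) {a : twoCochain R L L}
    (h : ∀ i j k, 1 ≤ i → i < j → j < k → k ≤ n → d₂₃ R L L a (e i) (e j) (e k) = 0) :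
    a ∈ twoCocycle R L L :=
  mem_twoCocycle_of_span_range_eq_top hg.span_eq_top
    (fun i j k hij hjk => h _ _ _ (by omega) (by omega) (by omega) (by omega))

theorem psiOne_mem_twoCocycle (hg : IsG0Family R n e) {i j : ℕ} (hi : 1 ≤ i) (hj : 1 ≤ j)
    (hn : 6 ≤ n) {ψ : twoCochain R L L} (hval : ψ (e (6 + i)) (e (6 + j)) = e 6)
    (hzero : ∀ a b, 1 ≤ a → 1 ≤ b → a ≤ n → b ≤ n →
      ¬((a = 6 + i ∧ b = 6 + j) ∨ (a = 6 + j ∧ b = 6 + i)) → ψ (e a) (e b) = 0) :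
    ψ ∈ twoCocycle R L L := by
  have hcentral : ∀ a b c, 1 ≤ a → a ≤ n → 1 ≤ b → b ≤ n → 1 ≤ c → c ≤ n →
      ⁅e a, ψ (e b) (e c)⁆ = 0 := by
    intro a b c ha han hb hbn hc hcn
    have hmem : ψ (e b) (e c) ∈ span R {e 6} := by
      by_cases h₁ : b = 6 + i ∧ c = 6 + j
      · rw [h₁.1, h₁.2, hval]
        exact mem_span_singleton_self _
      by_cases h₂ : b = 6 + j ∧ c = 6 + i
      · rw [h₂.1, h₂.2, ← twoCochain_skew, hval]
        exact neg_mem (mem_span_singleton_self _)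
      rw [hzero b c hb hc hbn hcn (by tauto)]
      exact zero_mem _
    refine LinearMap.eq_zero_of_mem_span (f := LieAlgebra.ad R L (e a)) ?_ hmem
    rintro _ rfl
    exact hg.lie_eq_zero ha han (by omega) hn (by omega) (by omega)
  have hderived : ∀ a b c, 1 ≤ a → a ≤ n → 1 ≤ b → b ≤ n → 1 ≤ c → c ≤ n →
      ψ ⁅e b, e c⁆ (e a) = 0 := by
    intro a b c ha han hb hbn hc hcn
    rw [← twoCochain_skew, neg_eq_zero]
    refine LinearMap.eq_zero_of_mem_span ?_ (hg.lie_mem_span hb hbn hc hcn)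
    rintro _ ⟨s, ⟨hs3, hs6⟩, rfl⟩
    exact hzero a s ha (by omega) han (by omega) (by omega)
  refine hg.mem_twoCocycle fun a b c ha hab hbc hcn => ?_
  simp (disch := omega) [d₂₃_apply, hcentral, hderived]

end IsG0Family

/-- The values of `ψ_i^j` on the basis. -/
structure IsPsiCochain {R L : Type*} [CommRing R] [LieRing L] [LieAlgebra R L] (n i j : ℕ)
    (e : ℕ → L) (ψ : twoCochain R L L) : Prop where
  apply_eq : ∀ l, 2 ≤ l → l ≤ 6 - j → ψ (e (6 + i)) (e l) = e (l + j)
  apply_eq_zero : ∀ a b, 1 ≤ a → 1 ≤ b → a ≤ n → b ≤ n →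
    ¬((a = 6 + i ∧ 2 ≤ b ∧ b ≤ 6 - j) ∨ (b = 6 + i ∧ 2 ≤ a ∧ a ≤ 6 - j)) → ψ (e a) (e b) = 0

namespace IsPsiCochain

variable {R L : Type*} [CommRing R] [LieRing L] [LieAlgebra R L] {n i j : ℕ} {e : ℕ → L}
  {ψ : twoCochain R L L}

theorem lie_one_apply (hψ : IsPsiCochain n i j e ψ) (hg : IsG0Family R n e) (hin : 6 + i ≤ n)
    {b : ℕ} (hb : 1 ≤ b) (hbn : b ≤ n) :
    ⁅e 1, ψ (e (6 + i)) (e b)⁆ = ψ (e (6 + i)) ⁅e 1, e b⁆ := by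
  by_cases hlow : 2 ≤ b ∧ b + j ≤ 5
  · rw [hψ.apply_eq b (by omega) (by omega), hg.lie_one_left _ (by omega) (by omega),
      hg.lie_one_left b (by omega) (by omega), hψ.apply_eq (b + 1) (by omega) (by omega),
      Nat.add_right_comm]
  have hleft : ⁅e 1, ψ (e (6 + i)) (e b)⁆ = 0 := by
    by_cases hb' : 2 ≤ b ∧ b ≤ 6 - j
    · rw [hψ.apply_eq b hb'.1 hb'.2, show b + j = 6 by omega]
      exact hg.lie_eq_zero le_rfl (by omega) (by omega) (by omega) (by omega) (by omega)
    · rw [hψ.apply_eq_zero _ _ (by omega) hb hin hbn (by omega), lie_zero]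
  have hright : ψ (e (6 + i)) ⁅e 1, e b⁆ = 0 := by
    by_cases hb' : 2 ≤ b ∧ b ≤ 5
    · rw [hg.lie_one_left b hb'.1 hb'.2,
        hψ.apply_eq_zero _ _ (by omega) (by omega) hin (by omega) (by omega)]
    · rw [hg.lie_eq_zero le_rfl (by omega) hb hbn (by omega) (by omega), map_zero]
  rw [hleft, hright]

theorem lie_apply_eq_zero (hψ : IsPsiCochain n i j e ψ) (hg : IsG0Family R n e)
    (hin : 6 + i ≤ n) {u b c : ℕ} (hu : u ≠ 1) (hu1 : 1 ≤ u) (hun : u ≤ n) (hb : 1 ≤ b)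
    (hbn : b ≤ n) (hc : 1 ≤ c) (hcn : c ≤ n) : ⁅e u, ψ (e b) (e c)⁆ = 0 := by
  have hmem : ψ (e b) (e c) ∈ span R (e '' Icc 2 6) := by
    by_cases h₁ : b = 6 + i ∧ 2 ≤ c ∧ c ≤ 6 - j
    · rw [h₁.1, hψ.apply_eq c h₁.2.1 h₁.2.2]
      exact subset_span ⟨c + j, ⟨by omega, by omega⟩, rfl⟩
    by_cases h₂ : c = 6 + i ∧ 2 ≤ b ∧ b ≤ 6 - j
    · rw [h₂.1, ← twoCochain_skew, hψ.apply_eq b h₂.2.1 h₂.2.2]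
      exact neg_mem (subset_span ⟨b + j, ⟨by omega, by omega⟩, rfl⟩)
    rw [hψ.apply_eq_zero b c hb hc hbn hcn (by tauto)]
    exact zero_mem _
  refine LinearMap.eq_zero_of_mem_span (f := LieAlgebra.ad R L (e u)) ?_ hmem
  rintro _ ⟨s, ⟨hs2, hs6⟩, rfl⟩
  exact hg.lie_eq_zero hu1 hun (by omega) (by omega) (by omega) (by omega)

theorem apply_lie_eq_zero (hψ : IsPsiCochain n i j e ψ) (hg : IsG0Family R n e) (hi : 1 ≤ i)
    (hin : 6 + i ≤ n) {a b c : ℕ} (ha : a ≠ 6 + i) (ha1 : 1 ≤ a) (han : a ≤ n) (hb : 1 ≤ b)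
    (hbn : b ≤ n) (hc : 1 ≤ c) (hcn : c ≤ n) : ψ ⁅e b, e c⁆ (e a) = 0 := by
  rw [← twoCochain_skew, neg_eq_zero]
  refine LinearMap.eq_zero_of_mem_span ?_ (hg.lie_mem_span hb hbn hc hcn)
  rintro _ ⟨s, ⟨hs3, hs6⟩, rfl⟩
  exact hψ.apply_eq_zero a s ha1 (by omega) han (by omega) (by omega)

theorem d₂₃_one (hψ : IsPsiCochain n i j e ψ) (hg : IsG0Family R n e) (hi : 1 ≤ i)
    (hin : 6 + i ≤ n) {b c : ℕ} (hb : 1 < b) (hbc : b < c) (hcn : c ≤ n) :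
    d₂₃ R L L ψ (e 1) (e b) (e c) = 0 := by
  have h1b : ψ (e 1) (e b) = 0 := hψ.apply_eq_zero 1 b le_rfl (by omega) (by omega) (by omega)
    (by omega)
  have h1c : ψ (e 1) (e c) = 0 := hψ.apply_eq_zero 1 c le_rfl (by omega) (by omega) hcn (by omega)
  have hbc0 : ⁅e b, e c⁆ = 0 :=
    hg.lie_eq_zero (by omega) (by omega) (by omega) hcn (by omega) (by omega)
  by_cases hc : c = 6 + i
  · subst hc
    have h1Y : ⁅e 1, e (6 + i)⁆ = 0 :=
      hg.lie_eq_zero le_rfl (by omega) (by omega) hin (by omega) (by omega)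
    rw [d₂₃_apply, ← twoCochain_skew ψ (e (6 + i)) (e b),
      ← twoCochain_skew ψ (e (6 + i)) ⁅e 1, e b⁆, ← hψ.lie_one_apply hg hin (by omega) (by omega),
      h1b, h1c, h1Y, hbc0]
    simp
  have hbc : ψ (e b) (e c) = 0 := hψ.apply_eq_zero b c (by omega) (by omega) (by omega) hcn
    (by omega)
  have h1cb : ψ ⁅e 1, e c⁆ (e b) = 0 := by
    by_cases hb' : b = 6 + i
    · rw [hg.lie_eq_zero le_rfl (by omega) (by omega) hcn (by omega) (by omega), map_zero,
        LinearMap.zero_apply]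
    · exact hψ.apply_lie_eq_zero hg hi hin hb' (by omega) (by omega) le_rfl (by omega) (by omega)
        hcn
  have h1bc : ψ ⁅e 1, e b⁆ (e c) = 0 :=
    hψ.apply_lie_eq_zero hg hi hin hc (by omega) hcn le_rfl (by omega) (by omega) (by omega)
  simp [d₂₃_apply, h1b, h1c, hbc, h1cb, h1bc, hbc0]

theorem mem_twoCocycle (hψ : IsPsiCochain n i j e ψ) (hg : IsG0Family R n e) (hi : 1 ≤ i)
    (hin : 6 + i ≤ n) : ψ ∈ twoCocycle R L L := by
  refine hg.mem_twoCocycle fun a b c ha hab hbc hcn => ?_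
  rcases eq_or_lt_of_le ha with rfl | ha
  · exact hψ.d₂₃_one hg hi hin hab hbc hcn
  have hab0 : ⁅e a, e b⁆ = 0 :=
    hg.lie_eq_zero (by omega) (by omega) (by omega) (by omega) (by omega) (by omega)
  have hac0 : ⁅e a, e c⁆ = 0 :=
    hg.lie_eq_zero (by omega) (by omega) (by omega) hcn (by omega) (by omega)
  have hbc0 : ⁅e b, e c⁆ = 0 :=
    hg.lie_eq_zero (by omega) (by omega) (by omega) hcn (by omega) (by omega)
  simp (disch := omega) [d₂₃_apply, hψ.lie_apply_eq_zero hg hin, hab0, hac0, hbc0]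

end IsPsiCochain

section Deformation

variable {R L : Type*} [CommRing R] [LieRing L] [LieAlgebra R L]

def deformedBracket (χ : L →ₗ[R] L →ₗ[R] L) : L →ₗ[R] L →ₗ[R] L :=
  (LieAlgebra.ad R L : L →ₗ[R] L →ₗ[R] L) + χ

@[simp]
theorem deformedBracket_apply (χ : L →ₗ[R] L →ₗ[R] L) (x y : L) :
    deformedBracket χ x y = ⁅x, y⁆ + χ x y :=
  rfl

theorem isAlt_deformedBracket {χ : L →ₗ[R] L →ₗ[R] L} (hχ : χ.IsAlt) :
    (deformedBracket χ).IsAlt := fun x => by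
  rw [deformedBracket_apply, lie_self, hχ, add_zero]

/-- The values on the basis of `χ = φ_{1,1} + φ_{3,2} + ψ₂³ + ∑_{t=2}^{m-3} ψ¹_{2t-1,2t}`. -/
structure IsG0Deformation (n m : ℕ) (e : ℕ → L) (χ : L →ₗ[R] L →ₗ[R] L) : Prop where
  isAlt : χ.IsAlt
  apply_five_two : χ (e 5) (e 2) = e 7
  apply_three_four : χ (e 3) (e 4) = e 7
  apply_three_two : χ (e 3) (e 2) = e 8
  apply_eight_two : χ (e 8) (e 2) = e 5
  apply_eight_three : χ (e 8) (e 3) = e 6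
  apply_pair : ∀ t, 2 ≤ t → t ≤ m - 3 → χ (e (2 * t + 5)) (e (2 * t + 6)) = e 6
  apply_eq_zero : ∀ a b, 1 ≤ a → 1 ≤ b → a ≤ n → b ≤ n →
    ¬((a = 5 ∧ b = 2) ∨ (a = 2 ∧ b = 5) ∨ (a = 3 ∧ b = 4) ∨ (a = 4 ∧ b = 3) ∨
      (a = 3 ∧ b = 2) ∨ (a = 2 ∧ b = 3) ∨ (a = 8 ∧ b = 2) ∨ (a = 2 ∧ b = 8) ∨
      (a = 8 ∧ b = 3) ∨ (a = 3 ∧ b = 8) ∨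
      (∃ t, 2 ≤ t ∧ t ≤ m - 3 ∧
        ((a = 2 * t + 5 ∧ b = 2 * t + 6) ∨ (a = 2 * t + 6 ∧ b = 2 * t + 5)))) →
    χ (e a) (e b) = 0

end Deformation

namespace IsG0Deformation

variable {R L : Type*} [CommRing R] [LieRing L] [LieAlgebra R L] {n m : ℕ} {e : ℕ → L}
  {χ : L →ₗ[R] L →ₗ[R] L}

theorem apply_two_five (hχ : IsG0Deformation n m e χ) : χ (e 2) (e 5) = -e 7 := by
  rw [← hχ.isAlt.neg, hχ.apply_five_two]

theorem apply_four_three (hχ : IsG0Deformation n m e χ) : χ (e 4) (e 3) = -e 7 := by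
  rw [← hχ.isAlt.neg, hχ.apply_three_four]

theorem apply_two_three (hχ : IsG0Deformation n m e χ) : χ (e 2) (e 3) = -e 8 := by
  rw [← hχ.isAlt.neg, hχ.apply_three_two]

theorem apply_two_eight (hχ : IsG0Deformation n m e χ) : χ (e 2) (e 8) = -e 5 := by
  rw [← hχ.isAlt.neg, hχ.apply_eight_two]

theorem apply_three_eight (hχ : IsG0Deformation n m e χ) : χ (e 3) (e 8) = -e 6 := by
  rw [← hχ.isAlt.neg, hχ.apply_eight_three]

theorem apply_pair_swap (hχ : IsG0Deformation n m e χ) {t : ℕ} (ht : 2 ≤ t) (htm : t ≤ m - 3) :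
    χ (e (2 * t + 6)) (e (2 * t + 5)) = -e 6 := by
  rw [← hχ.isAlt.neg, hχ.apply_pair t ht htm]

theorem apply_eq_zero_of_le_eight (hχ : IsG0Deformation n m e χ) {a b : ℕ} (ha : 1 ≤ a)
    (hb : 1 ≤ b) (han : a ≤ n) (hbn : b ≤ n) (hab : a ≤ 8 ∨ b ≤ 8)
    (hsmall : ¬((a = 5 ∧ b = 2) ∨ (a = 2 ∧ b = 5) ∨ (a = 3 ∧ b = 4) ∨ (a = 4 ∧ b = 3) ∨
      (a = 3 ∧ b = 2) ∨ (a = 2 ∧ b = 3) ∨ (a = 8 ∧ b = 2) ∨ (a = 2 ∧ b = 8) ∨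
      (a = 8 ∧ b = 3) ∨ (a = 3 ∧ b = 8))) :
    χ (e a) (e b) = 0 :=
  hχ.apply_eq_zero a b ha hb han hbn
    (by rintro (h | h | h | h | h | h | h | h | h | h | ⟨t, ht, -, h⟩) <;> omega)

theorem apply_mem_span (hχ : IsG0Deformation n m e χ) {a b : ℕ} (ha : 1 ≤ a) (hb : 1 ≤ b)
    (han : a ≤ n) (hbn : b ≤ n) : χ (e a) (e b) ∈ span R (e '' Icc 3 8) := by
  by_cases hD : (a = 5 ∧ b = 2) ∨ (a = 2 ∧ b = 5) ∨ (a = 3 ∧ b = 4) ∨ (a = 4 ∧ b = 3) ∨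
      (a = 3 ∧ b = 2) ∨ (a = 2 ∧ b = 3) ∨ (a = 8 ∧ b = 2) ∨ (a = 2 ∧ b = 8) ∨
      (a = 8 ∧ b = 3) ∨ (a = 3 ∧ b = 8) ∨
      (∃ t, 2 ≤ t ∧ t ≤ m - 3 ∧
        ((a = 2 * t + 5 ∧ b = 2 * t + 6) ∨ (a = 2 * t + 6 ∧ b = 2 * t + 5)))
  · rcases hD with ⟨rfl, rfl⟩ | ⟨rfl, rfl⟩ | ⟨rfl, rfl⟩ | ⟨rfl, rfl⟩ | ⟨rfl, rfl⟩ | ⟨rfl, rfl⟩ |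
      ⟨rfl, rfl⟩ | ⟨rfl, rfl⟩ | ⟨rfl, rfl⟩ | ⟨rfl, rfl⟩ | ⟨t, ht, htm, ⟨rfl, rfl⟩ | ⟨rfl, rfl⟩⟩ <;>
    simp (disch := assumption) only [hχ.apply_five_two, hχ.apply_two_five, hχ.apply_three_four,
      hχ.apply_four_three, hχ.apply_three_two, hχ.apply_two_three, hχ.apply_eight_two,
      hχ.apply_two_eight, hχ.apply_eight_three, hχ.apply_three_eight, hχ.apply_pair,
      hχ.apply_pair_swap] <;>
    first
      | exact subset_span (mem_image_of_mem e ⟨by omega, by omega⟩)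
      | exact neg_mem (subset_span (mem_image_of_mem e ⟨by omega, by omega⟩))
  · rw [hχ.apply_eq_zero a b ha hb han hbn hD]
    exact zero_mem _

theorem apply_mem_span_six (hχ : IsG0Deformation n m e χ) {a b : ℕ} (ha : 1 ≤ a) (hb : 1 ≤ b)
    (han : a ≤ n) (hbn : b ≤ n) (hab : 9 ≤ a ∨ 9 ≤ b) : χ (e a) (e b) ∈ span R {e 6} := by
  by_cases hpair : ∃ t, 2 ≤ t ∧ t ≤ m - 3 ∧
      ((a = 2 * t + 5 ∧ b = 2 * t + 6) ∨ (a = 2 * t + 6 ∧ b = 2 * t + 5))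
  · obtain ⟨t, ht, htm, ⟨rfl, rfl⟩ | ⟨rfl, rfl⟩⟩ := hpair
    · rw [hχ.apply_pair t ht htm]
      exact mem_span_singleton_self _
    · rw [hχ.apply_pair_swap ht htm]
      exact neg_mem (mem_span_singleton_self _)
  · rw [hχ.apply_eq_zero a b ha hb han hbn
      (by rintro (h | h | h | h | h | h | h | h | h | h | h) <;> first | omega | exact hpair h)]
    exact zero_mem _

theorem deformedBracket_mem_span (hg : IsG0Family R n e) (hχ : IsG0Deformation n m e χ)
    {a b : ℕ} (ha : 1 ≤ a) (hb : 1 ≤ b) (han : a ≤ n) (hbn : b ≤ n) :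
    deformedBracket χ (e a) (e b) ∈ span R (e '' Icc 3 8) :=
  add_mem (span_mono (image_mono (Icc_subset_Icc le_rfl (by norm_num)))
    (hg.lie_mem_span ha han hb hbn)) (hχ.apply_mem_span ha hb han hbn)

theorem deformedBracket_mem_span_six (hg : IsG0Family R n e) (hχ : IsG0Deformation n m e χ)
    {a b : ℕ} (ha : 1 ≤ a) (hb : 1 ≤ b) (han : a ≤ n) (hbn : b ≤ n) (hab : 9 ≤ a ∨ 9 ≤ b) :
    deformedBracket χ (e a) (e b) ∈ span R {e 6} := by
  rw [deformedBracket_apply, hg.lie_eq_zero ha han hb hbn (by omega) (by omega), zero_add]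
  exact hχ.apply_mem_span_six ha hb han hbn hab

theorem deformedBracket_eq_zero_of_nine_le (hg : IsG0Family R n e)
    (hχ : IsG0Deformation n m e χ) {a b : ℕ} (ha : 9 ≤ a) (han : a ≤ n) (hb : 3 ≤ b)
    (hb8 : b ≤ 8) : deformedBracket χ (e a) (e b) = 0 := by
  rw [deformedBracket_apply, hg.lie_eq_zero (by omega) han (by omega) (by omega) (by omega)
    (by omega), hχ.apply_eq_zero_of_le_eight (by omega) (by omega) han (by omega) (by omega)
    (by omega), add_zero]

theorem deformedBracket_apply_six (hg : IsG0Family R n e) (hχ : IsG0Deformation n m e χ)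
    (hn : 6 ≤ n) {a : ℕ} (ha : 1 ≤ a) (han : a ≤ n) : deformedBracket χ (e a) (e 6) = 0 := by
  rw [deformedBracket_apply, hg.lie_eq_zero ha han (by omega) hn (by omega) (by omega),
    hχ.apply_eq_zero_of_le_eight ha (by omega) han hn (by omega) (by omega), add_zero]

theorem jacobiator_of_nine_le (hg : IsG0Family R n e) (hχ : IsG0Deformation n m e χ)
    {a b c : ℕ} (ha : 1 ≤ a) (hab : a < b) (hbc : b < c) (hc : 9 ≤ c) (hcn : c ≤ n) :
    jacobiator (deformedBracket χ) (e a) (e b) (e c) = 0 := by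
  have hkill6 : ∀ u, 1 ≤ u → u ≤ n → ∀ y ∈ ({e 6} : Set L), deformedBracket χ (e u) y = 0 := by
    rintro u hu hun _ rfl
    exact hχ.deformedBracket_apply_six hg (by omega) hu hun
  have h₁ := LinearMap.eq_zero_of_mem_span (hkill6 a ha (by omega))
    (hχ.deformedBracket_mem_span_six hg (a := b) (b := c) (by omega) (by omega) (by omega) hcn
      (by omega))
  have h₂ := LinearMap.eq_zero_of_mem_span (f := deformedBracket χ (e c))
    (by
      rintro _ ⟨s, ⟨hs3, hs8⟩, rfl⟩
      exact hχ.deformedBracket_eq_zero_of_nine_le hg hc hcn hs3 hs8)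
    (hχ.deformedBracket_mem_span hg (a := a) (b := b) ha (by omega) (by omega) (by omega))
  have h₃ := LinearMap.eq_zero_of_mem_span (hkill6 b (by omega) (by omega))
    (hχ.deformedBracket_mem_span_six hg (a := c) (b := a) (by omega) ha hcn (by omega) (by omega))
  rw [jacobiator, h₁, h₂, h₃, add_zero, add_zero]

theorem jacobiator_of_le_eight (hg : IsG0Family R n e) (hχ : IsG0Deformation n m e χ)
    (hn : 8 ≤ n) {a b c : ℕ} (ha : 1 ≤ a) (hab : a < b) (hbc : b < c) (hc : c ≤ 8) :
    jacobiator (deformedBracket χ) (e a) (e b) (e c) = 0 := by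
  -- bounded by `8` rather than `n`, so that `decide` discharges the side conditions on numerals
  have hlie : ∀ a b, 1 ≤ a → a ≤ 8 → 1 ≤ b → b ≤ 8 → ¬(a = 1 ∧ 2 ≤ b ∧ b ≤ 5) →
      ¬(b = 1 ∧ 2 ≤ a ∧ a ≤ 5) → ⁅e a, e b⁆ = 0 :=
    fun a b ha ha8 hb hb8 => hg.lie_eq_zero ha (by omega) hb (by omega)
  have hzero : ∀ a b, 1 ≤ a → 1 ≤ b → a ≤ 8 → b ≤ 8 →
      ¬((a = 5 ∧ b = 2) ∨ (a = 2 ∧ b = 5) ∨ (a = 3 ∧ b = 4) ∨ (a = 4 ∧ b = 3) ∨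
        (a = 3 ∧ b = 2) ∨ (a = 2 ∧ b = 3) ∨ (a = 8 ∧ b = 2) ∨ (a = 2 ∧ b = 8) ∨
        (a = 8 ∧ b = 3) ∨ (a = 3 ∧ b = 8)) → χ (e a) (e b) = 0 :=
    fun a b ha hb ha8 hb8 => hχ.apply_eq_zero_of_le_eight ha hb (by omega) (by omega) (by omega)
  interval_cases c <;> interval_cases b <;> interval_cases a <;>
    simp (disch := decide) [jacobiator, hg.lie_one_left, hg.lie_one_right, hlie, hzero,
      hχ.apply_five_two, hχ.apply_two_five, hχ.apply_three_four, hχ.apply_four_three,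
      hχ.apply_two_three, hχ.apply_eight_two, hχ.apply_two_eight, hχ.apply_eight_three,
      hχ.apply_three_eight]

theorem jacobiator_deformedBracket_eq_zero (hg : IsG0Family R n e)
    (hχ : IsG0Deformation n m e χ) (hn : 8 ≤ n) (x y z : L) :
    jacobiator (deformedBracket χ) x y z = 0 :=
  hg.eq_zero_of_alternating (isLinearMap_jacobiator _) (jacobiator_cyclic _)
    (jacobiator_self (isAlt_deformedBracket hχ.isAlt))
    (fun a b c ha hab hbc hcn => if hc : c ≤ 8 then hχ.jacobiator_of_le_eight hg hn ha hab hbc hc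
      else hχ.jacobiator_of_nine_le hg ha hab hbc (by omega) hcn) x y z

end IsG0Deformation

theorem stmt12_general (n : ℕ) (g : Type*) [LieRing g] [LieAlgebra ℂ g]
    (e : ℕ → g)
    (hspan : Submodule.span ℂ (Set.range (fun i : Fin n => e (i.1 + 1))) = ⊤)
    (hbr : ∀ j, 2 ≤ j → j ≤ 5 → ⁅e 1, e j⁆ = e (j + 1))
    (hbr0 : ∀ i j, 1 ≤ i → i < j → j ≤ n → ¬(i = 1 ∧ 2 ≤ j ∧ j ≤ 5) → ⁅e i, e j⁆ = 0) :
    -- (a) the maps ψ¹_{i,j} are 2-cocycles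
    (∀ i j, 1 ≤ i → i < j → j ≤ n - 6 → ∀ ψ : g →ₗ[ℂ] g →ₗ[ℂ] g,
      (∀ x : g, ψ x x = 0) →
      ψ (e (6 + i)) (e (6 + j)) = e 6 →
      (∀ a b, 1 ≤ a → 1 ≤ b → a ≤ n → b ≤ n →
        ¬((a = 6 + i ∧ b = 6 + j) ∨ (a = 6 + j ∧ b = 6 + i)) →
        ψ (e a) (e b) = 0) →
      ∀ x y z : g,
        ⁅x, ψ y z⁆ + ⁅z, ψ x y⁆ + ⁅y, ψ z x⁆ +
          ψ x ⁅y, z⁆ + ψ z ⁅x, y⁆ + ψ y ⁅z, x⁆ = 0) ∧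
    -- (b) the maps ψ_i^j are 2-cocycles
    (∀ i j, 1 ≤ i → i ≤ n - 6 → j = 2 ∨ j = 3 ∨ j = 4 → ∀ ψ : g →ₗ[ℂ] g →ₗ[ℂ] g,
      (∀ x : g, ψ x x = 0) →
      (∀ l, 2 ≤ l → l ≤ 6 - j → ψ (e (6 + i)) (e l) = e (l + j)) →
      (∀ a b, 1 ≤ a → 1 ≤ b → a ≤ n → b ≤ n →
        ¬((a = 6 + i ∧ 2 ≤ b ∧ b ≤ 6 - j) ∨ (b = 6 + i ∧ 2 ≤ a ∧ a ≤ 6 - j)) →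
        ψ (e a) (e b) = 0) →
      ∀ x y z : g,
        ⁅x, ψ y z⁆ + ⁅z, ψ x y⁆ + ⁅y, ψ z x⁆ +
          ψ x ⁅y, z⁆ + ψ z ⁅x, y⁆ + ψ y ⁅z, x⁆ = 0) ∧
    -- (c) the deformed law g₀ⁿ + φ_{1,1} + φ_{3,2} + ψ₂³ + Σ_{t} ψ¹_{2t-1,2t}
    -- (for n = 2m, m ≥ 5) satisfies the Jacobi identity
    (∀ m, 5 ≤ m → n = 2 * m → ∀ χ : g →ₗ[ℂ] g →ₗ[ℂ] g,
      (∀ x : g, χ x x = 0) →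
      χ (e 5) (e 2) = e 7 →
      χ (e 3) (e 4) = e 7 →
      χ (e 3) (e 2) = e 8 →
      χ (e 8) (e 2) = e 5 →
      χ (e 8) (e 3) = e 6 →
      (∀ t, 2 ≤ t → t ≤ m - 3 → χ (e (2 * t + 5)) (e (2 * t + 6)) = e 6) →
      (∀ a b, 1 ≤ a → 1 ≤ b → a ≤ n → b ≤ n →
        ¬((a = 5 ∧ b = 2) ∨ (a = 2 ∧ b = 5) ∨ (a = 3 ∧ b = 4) ∨ (a = 4 ∧ b = 3) ∨
          (a = 3 ∧ b = 2) ∨ (a = 2 ∧ b = 3) ∨ (a = 8 ∧ b = 2) ∨ (a = 2 ∧ b = 8) ∨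
          (a = 8 ∧ b = 3) ∨ (a = 3 ∧ b = 8) ∨
          (∃ t, 2 ≤ t ∧ t ≤ m - 3 ∧
            ((a = 2 * t + 5 ∧ b = 2 * t + 6) ∨ (a = 2 * t + 6 ∧ b = 2 * t + 5)))) →
        χ (e a) (e b) = 0) →
      ∀ x y z : g,
        (⁅x, ⁅y, z⁆ + χ y z⁆ + χ x (⁅y, z⁆ + χ y z)) +
        (⁅z, ⁅x, y⁆ + χ x y⁆ + χ z (⁅x, y⁆ + χ x y)) +
        (⁅y, ⁅z, x⁆ + χ z x⁆ + χ y (⁅z, x⁆ + χ z x)) = 0) := by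
  have hg : IsG0Family ℂ n e := ⟨hspan, hbr, hbr0⟩
  refine ⟨?_, ?_, ?_⟩
  · intro i j hi hij hjn ψ halt hval hzero
    exact cocycle_identity_of_mem_twoCocycle
      (hg.psiOne_mem_twoCocycle (ψ := ⟨ψ, halt⟩) hi (by omega) (by omega) hval hzero)
  · intro i j hi hin _ ψ halt hval hzero
    exact cocycle_identity_of_mem_twoCocycle
      (IsPsiCochain.mem_twoCocycle (ψ := ⟨ψ, halt⟩) ⟨hval, hzero⟩ hg hi (by omega))
  · intro m hm hnm χ halt h52 h34 h32 h82 h83 hfam hz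
    exact IsG0Deformation.jacobiator_deformedBracket_eq_zero hg
      ⟨halt, h52, h34, h32, h82, h83, hfam, hz⟩ (by omega)

/-- with `g₀ⁿ` as in Statement 10 (basis `e 1, ..., e n`, `X_l = e l`
for `1 ≤ l ≤ 6` and `Y_k = e (6+k)`):
(a) for `1 ≤ i < j ≤ n-6` the alternating map `ψ¹_{i,j}` with
`ψ¹_{i,j}(Y_i, Y_j) = X₆` (zero otherwise) is a `2`-cocycle;
(b) for `j ∈ {2,3,4}` and `1 ≤ i ≤ n-6` the map `ψ_i^j` with
`ψ_i^j (Y_i, X_l) = X_{l+j}` for `2 ≤ l ≤ 6-j` (zero otherwise) is a `2`-cocycle;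
(c) for `n = 2m`, `m ≥ 5`, the deformed law
`g₀ⁿ + φ_{1,1} + φ_{3,2} + ψ₂³ + Σ_{t=2}^{m-3} ψ¹_{2t-1,2t}` satisfies the Jacobi
identity, i.e. defines a Lie algebra law. -/
theorem stmt12 (n : ℕ) (hn : 7 ≤ n) (g : Type*) [LieRing g] [LieAlgebra ℂ g]
    (e : ℕ → g)
    (hindep : LinearIndependent ℂ (fun i : Fin n => e (i.1 + 1)))
    (hspan : Submodule.span ℂ (Set.range (fun i : Fin n => e (i.1 + 1))) = ⊤)
    (hbr : ∀ j, 2 ≤ j → j ≤ 5 → ⁅e 1, e j⁆ = e (j + 1))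
    (hbr0 : ∀ i j, 1 ≤ i → i < j → j ≤ n → ¬(i = 1 ∧ 2 ≤ j ∧ j ≤ 5) → ⁅e i, e j⁆ = 0) :
    -- (a) the maps ψ¹_{i,j} are 2-cocycles
    (∀ i j, 1 ≤ i → i < j → j ≤ n - 6 → ∀ ψ : g →ₗ[ℂ] g →ₗ[ℂ] g,
      (∀ x : g, ψ x x = 0) →
      ψ (e (6 + i)) (e (6 + j)) = e 6 →
      (∀ a b, 1 ≤ a → 1 ≤ b → a ≤ n → b ≤ n →
        ¬((a = 6 + i ∧ b = 6 + j) ∨ (a = 6 + j ∧ b = 6 + i)) →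
        ψ (e a) (e b) = 0) →
      ∀ x y z : g,
        ⁅x, ψ y z⁆ + ⁅z, ψ x y⁆ + ⁅y, ψ z x⁆ +
          ψ x ⁅y, z⁆ + ψ z ⁅x, y⁆ + ψ y ⁅z, x⁆ = 0) ∧
    -- (b) the maps ψ_i^j are 2-cocycles
    (∀ i j, 1 ≤ i → i ≤ n - 6 → j = 2 ∨ j = 3 ∨ j = 4 → ∀ ψ : g →ₗ[ℂ] g →ₗ[ℂ] g,
      (∀ x : g, ψ x x = 0) →
      (∀ l, 2 ≤ l → l ≤ 6 - j → ψ (e (6 + i)) (e l) = e (l + j)) →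
      (∀ a b, 1 ≤ a → 1 ≤ b → a ≤ n → b ≤ n →
        ¬((a = 6 + i ∧ 2 ≤ b ∧ b ≤ 6 - j) ∨ (b = 6 + i ∧ 2 ≤ a ∧ a ≤ 6 - j)) →
        ψ (e a) (e b) = 0) →
      ∀ x y z : g,
        ⁅x, ψ y z⁆ + ⁅z, ψ x y⁆ + ⁅y, ψ z x⁆ +
          ψ x ⁅y, z⁆ + ψ z ⁅x, y⁆ + ψ y ⁅z, x⁆ = 0) ∧
    -- (c) the deformed law g₀ⁿ + φ_{1,1} + φ_{3,2} + ψ₂³ + Σ_{t} ψ¹_{2t-1,2t}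
    -- (for n = 2m, m ≥ 5) satisfies the Jacobi identity
    (∀ m, 5 ≤ m → n = 2 * m → ∀ χ : g →ₗ[ℂ] g →ₗ[ℂ] g,
      (∀ x : g, χ x x = 0) →
      χ (e 5) (e 2) = e 7 →
      χ (e 3) (e 4) = e 7 →
      χ (e 3) (e 2) = e 8 →
      χ (e 8) (e 2) = e 5 →
      χ (e 8) (e 3) = e 6 →
      (∀ t, 2 ≤ t → t ≤ m - 3 → χ (e (2 * t + 5)) (e (2 * t + 6)) = e 6) →
      (∀ a b, 1 ≤ a → 1 ≤ b → a ≤ n → b ≤ n →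
        ¬((a = 5 ∧ b = 2) ∨ (a = 2 ∧ b = 5) ∨ (a = 3 ∧ b = 4) ∨ (a = 4 ∧ b = 3) ∨
          (a = 3 ∧ b = 2) ∨ (a = 2 ∧ b = 3) ∨ (a = 8 ∧ b = 2) ∨ (a = 2 ∧ b = 8) ∨
          (a = 8 ∧ b = 3) ∨ (a = 3 ∧ b = 8) ∨
          (∃ t, 2 ≤ t ∧ t ≤ m - 3 ∧
            ((a = 2 * t + 5 ∧ b = 2 * t + 6) ∨ (a = 2 * t + 6 ∧ b = 2 * t + 5)))) →
        χ (e a) (e b) = 0) →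
      ∀ x y z : g,
        (⁅x, ⁅y, z⁆ + χ y z⁆ + χ x (⁅y, z⁆ + χ y z)) +
        (⁅z, ⁅x, y⁆ + χ x y⁆ + χ z (⁅x, y⁆ + χ x y)) +
        (⁅y, ⁅z, x⁆ + χ z x⁆ + χ y (⁅z, x⁆ + χ z x)) = 0) :=
  stmt12_general n g e hspan hbr hbr0
end

section
/- The Lie algebra g¹_{2m} (m ≥ 4) with basis X₁,...,X₆, Y₁,...,Y_{2m−6} and nonzero brackets [X₁,X_j] = X_{j+1} (2 ≤ j ≤ 5), [X₅,X₂] = [X₃,X₄] = Y₁, [X₃,X₂] = Y₂, [Y₂,X₂] = X₅, [Y₂,X₃] = X₆, [Y_{2t−1}, Y_{2t}] = X₆ (2 ≤ t ≤ m−3) is 2-abelian: its derived subalgebra is not abelian but C²g is abelian. -/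
/-! By bilinearity it suffices to bracket basis vectors. The table then puts `C¹g` inside the
span of `X₃, …, X₆, Y₁, Y₂` and `C²g` inside the span of `X₄, X₅, X₆, Y₁, Y₂`, on which all
brackets vanish. Conversely `X₃ = [X₁, X₂]` and `X₄ = [X₁, X₃]` lie in `C¹g`, and
`[X₃, X₄] = Y₁ ≠ 0`. -/

open Submodule Set

theorem Submodule.lie_mem_comm {R L : Type*} [CommRing R] [LieRing L] [LieAlgebra R L]
    {P : Submodule R L} {x y : L} : ⁅x, y⁆ ∈ P ↔ ⁅y, x⁆ ∈ P := by
  rw [← lie_skew, neg_mem_iff]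

theorem Submodule.lie_mem_of_mem_span {R L M : Type*} [CommRing R] [LieRing L] [LieAlgebra R L]
    [AddCommGroup M] [Module R M] [LieRingModule L M] [LieModule R L M]
    {s : Set L} {t : Set M} {P : Submodule R M} (h : ∀ x ∈ s, ∀ n ∈ t, ⁅x, n⁆ ∈ P)
    {x : L} {n : M} (hx : x ∈ span R s) (hn : n ∈ span R t) : ⁅x, n⁆ ∈ P := by
  induction hx, hn using span_induction₂ with
  | mem_mem x n hx hn => exact h x hx n hn
  | zero_left => simp
  | zero_right => simp
  | add_left _ _ _ _ _ _ h₁ h₂ => rw [add_lie]; exact add_mem h₁ h₂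
  | add_right _ _ _ _ _ _ h₁ h₂ => rw [lie_add]; exact add_mem h₁ h₂
  | smul_left r _ _ _ _ h => rw [smul_lie]; exact smul_mem _ r h
  | smul_right r _ _ _ _ h => rw [lie_smul]; exact smul_mem _ r h

theorem LieSubmodule.lieIdeal_oper_le_of_le_span {R L M : Type*} [CommRing R] [LieRing L]
    [LieAlgebra R L] [AddCommGroup M] [Module R M] [LieRingModule L M] [LieModule R L M]
    {I : LieIdeal R L} {N : LieSubmodule R L M} {s : Set L} {t : Set M} {P : Submodule R M}
    (hI : (I : Submodule R L) ≤ span R s) (hN : (N : Submodule R M) ≤ span R t)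
    (h : ∀ x ∈ s, ∀ n ∈ t, ⁅x, n⁆ ∈ P) :
    ((⁅I, N⁆ : LieSubmodule R L M) : Submodule R M) ≤ P := by
  rw [lieIdeal_oper_eq_linear_span', span_le]
  rintro _ ⟨x, hx, n, hn, rfl⟩
  exact lie_mem_of_mem_span h (hI hx) (hN hn)

theorem LieModule.lie_mem_lowerCentralSeries_one {R L : Type*} [CommRing R] [LieRing L]
    [LieAlgebra R L] (x y : L) : ⁅x, y⁆ ∈ lowerCentralSeries R L L 1 :=
  LieSubmodule.lie_mem_lie (LieSubmodule.mem_top x) (LieSubmodule.mem_top y)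

/-- The bracket relations of `g¹_{2m}` on `e`, where `X_l = e l` and `Y_k = e (6 + k)`. -/
structure G1Brackets {g : Type*} [LieRing g] (m : ℕ) (e : ℕ → g) : Prop where
  lie_one : ∀ j, 2 ≤ j → j ≤ 5 → ⁅e 1, e j⁆ = e (j + 1)
  lie_five_two : ⁅e 5, e 2⁆ = e 7
  lie_three_four : ⁅e 3, e 4⁆ = e 7
  lie_three_two : ⁅e 3, e 2⁆ = e 8
  lie_eight_two : ⁅e 8, e 2⁆ = e 5
  lie_eight_three : ⁅e 8, e 3⁆ = e 6
  lie_pair : ∀ t, 2 ≤ t → t ≤ m - 3 → ⁅e (2 * t + 5), e (2 * t + 6)⁆ = e 6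
  lie_eq_zero : ∀ i j, 1 ≤ i → i < j → j ≤ 2 * m →
    ¬(i = 1 ∧ 2 ≤ j ∧ j ≤ 5) →
    ¬(i = 2 ∧ j = 5) → ¬(i = 3 ∧ j = 4) → ¬(i = 2 ∧ j = 3) →
    ¬(i = 2 ∧ j = 8) → ¬(i = 3 ∧ j = 8) →
    ¬(∃ t, 2 ≤ t ∧ t ≤ m - 3 ∧ i = 2 * t + 5 ∧ j = 2 * t + 6) →
    ⁅e i, e j⁆ = 0

namespace G1Brackets

variable {R g : Type*} [CommRing R] [LieRing g] [LieAlgebra R g] {m : ℕ} {e : ℕ → g}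

theorem lie_mem_span_of_lt (h : G1Brackets m e) {i j : ℕ} (hi : 1 ≤ i) (hij : i < j)
    (hj : j ≤ 2 * m) (h12 : ¬(i = 1 ∧ j = 2)) : ⁅e i, e j⁆ ∈ span R (e '' Icc 4 8) := by
  have mem : ∀ k, 4 ≤ k → k ≤ 8 → e k ∈ span R (e '' Icc 4 8) :=
    fun k h₄ h₈ => subset_span ⟨k, ⟨h₄, h₈⟩, rfl⟩
  by_cases c1 : i = 1 ∧ 2 ≤ j ∧ j ≤ 5
  · obtain ⟨rfl, hj₂, hj₅⟩ := c1
    rw [h.lie_one j hj₂ hj₅]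
    exact mem _ (by omega) (by omega)
  by_cases c2 : i = 2 ∧ j = 5
  · obtain ⟨rfl, rfl⟩ := c2
    rw [lie_mem_comm, h.lie_five_two]
    exact mem 7 (by norm_num) (by norm_num)
  by_cases c3 : i = 3 ∧ j = 4
  · obtain ⟨rfl, rfl⟩ := c3
    rw [h.lie_three_four]
    exact mem 7 (by norm_num) (by norm_num)
  by_cases c4 : i = 2 ∧ j = 3
  · obtain ⟨rfl, rfl⟩ := c4
    rw [lie_mem_comm, h.lie_three_two]
    exact mem 8 (by norm_num) (by norm_num)
  by_cases c5 : i = 2 ∧ j = 8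
  · obtain ⟨rfl, rfl⟩ := c5
    rw [lie_mem_comm, h.lie_eight_two]
    exact mem 5 (by norm_num) (by norm_num)
  by_cases c6 : i = 3 ∧ j = 8
  · obtain ⟨rfl, rfl⟩ := c6
    rw [lie_mem_comm, h.lie_eight_three]
    exact mem 6 (by norm_num) (by norm_num)
  by_cases c7 : ∃ t, 2 ≤ t ∧ t ≤ m - 3 ∧ i = 2 * t + 5 ∧ j = 2 * t + 6
  · obtain ⟨t, ht₂, ht₃, rfl, rfl⟩ := c7
    rw [h.lie_pair t ht₂ ht₃]
    exact mem 6 (by norm_num) (by norm_num)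
  rw [h.lie_eq_zero i j hi hij hj c1 c2 c3 c4 c5 c6 c7]
  exact zero_mem _

theorem lie_mem_span_Icc_four_eight (h : G1Brackets m e) {i j : ℕ} (hi : 1 ≤ i)
    (hi' : i ≤ 2 * m) (hj : 3 ≤ j) (hj' : j ≤ 2 * m) :
    ⁅e i, e j⁆ ∈ span R (e '' Icc 4 8) := by
  rcases lt_trichotomy i j with hij | rfl | hij
  · exact h.lie_mem_span_of_lt hi hij hj' (by omega)
  · simp
  · exact lie_mem_comm.1 (h.lie_mem_span_of_lt (by omega) hij hi' (by omega))

theorem lie_mem_span_Icc_three_eight (h : G1Brackets m e) {i j : ℕ} (hi : 1 ≤ i)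
    (hi' : i ≤ 2 * m) (hj : 1 ≤ j) (hj' : j ≤ 2 * m) :
    ⁅e i, e j⁆ ∈ span R (e '' Icc 3 8) := by
  have of_lt : ∀ {i j}, 1 ≤ i → i < j → j ≤ 2 * m →
      ⁅e i, e j⁆ ∈ span R (e '' Icc 3 8) := by
    intro i j hi hij hj
    by_cases h12 : i = 1 ∧ j = 2
    · obtain ⟨rfl, rfl⟩ := h12
      rw [h.lie_one 2 le_rfl (by norm_num)]
      exact subset_span ⟨3, ⟨le_rfl, by norm_num⟩, rfl⟩
    · exact span_mono (image_mono (Icc_subset_Icc (by norm_num) le_rfl))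
        (h.lie_mem_span_of_lt hi hij hj h12)
  rcases lt_trichotomy i j with hij | rfl | hij
  · exact of_lt hi hij hj'
  · simp
  · exact lie_mem_comm.1 (of_lt hj hij hi')

theorem lie_eq_zero_of_four_le (h : G1Brackets m e) (hm : 4 ≤ m) {i j : ℕ} (hi : 4 ≤ i)
    (hi' : i ≤ 8) (hj : 4 ≤ j) (hj' : j ≤ 8) : ⁅e i, e j⁆ = 0 := by
  have of_lt : ∀ {i j}, 4 ≤ i → i < j → j ≤ 8 → ⁅e i, e j⁆ = 0 := by
    intro i j hi hij hj
    refine h.lie_eq_zero i j (by omega) hij (by omega) (by omega) (by omega) (by omega)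
      (by omega) (by omega) (by omega) ?_
    rintro ⟨t, ht₂, -, rfl, -⟩
    omega
  rcases lt_trichotomy i j with hij | rfl | hij
  · exact of_lt hi hij hj'
  · exact lie_self _
  · rw [← lie_skew, of_lt hj hij hi', neg_zero]

theorem lowerCentralSeries_one_le (h : G1Brackets m e)
    (hspan : span R (range fun i : Fin (2 * m) => e (i.1 + 1)) = ⊤) :
    (LieModule.lowerCentralSeries R g g 1 : Submodule R g) ≤ span R (e '' Icc 3 8) := by
  refine LieSubmodule.lieIdeal_oper_le_of_le_span hspan.ge hspan.ge ?_
  rintro _ ⟨i, rfl⟩ _ ⟨j, rfl⟩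
  exact h.lie_mem_span_Icc_three_eight (by omega) i.isLt (by omega) j.isLt

theorem lowerCentralSeries_two_le (h : G1Brackets m e) (hm : 4 ≤ m)
    (hspan : span R (range fun i : Fin (2 * m) => e (i.1 + 1)) = ⊤) :
    (LieModule.lowerCentralSeries R g g 2 : Submodule R g) ≤ span R (e '' Icc 4 8) := by
  refine LieSubmodule.lieIdeal_oper_le_of_le_span hspan.ge (h.lowerCentralSeries_one_le hspan) ?_
  rintro _ ⟨i, rfl⟩ _ ⟨j, ⟨hj, hj'⟩, rfl⟩
  exact h.lie_mem_span_Icc_four_eight (by omega) i.isLt hj (by omega)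

theorem lie_lowerCentralSeries_one_ne_bot (h : G1Brackets m e) (he : e 7 ≠ 0) :
    ⁅LieModule.lowerCentralSeries R g g 1, LieModule.lowerCentralSeries R g g 1⁆ ≠ ⊥ := by
  intro habs
  have : ⁅⁅e 1, e 2⁆, ⁅e 1, e 3⁆⁆ ∈
      ⁅LieModule.lowerCentralSeries R g g 1, LieModule.lowerCentralSeries R g g 1⁆ :=
    LieSubmodule.lie_mem_lie (LieModule.lie_mem_lowerCentralSeries_one _ _)
      (LieModule.lie_mem_lowerCentralSeries_one _ _)
  rw [h.lie_one 2 le_rfl (by norm_num), h.lie_one 3 (by norm_num) (by norm_num),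
    h.lie_three_four, habs, LieSubmodule.mem_bot] at this
  exact he this

theorem lie_lowerCentralSeries_two_eq_bot (h : G1Brackets m e) (hm : 4 ≤ m)
    (hspan : span R (range fun i : Fin (2 * m) => e (i.1 + 1)) = ⊤) :
    ⁅LieModule.lowerCentralSeries R g g 2, LieModule.lowerCentralSeries R g g 2⁆ = ⊥ := by
  rw [← LieSubmodule.toSubmodule_eq_bot, ← le_bot_iff]
  refine LieSubmodule.lieIdeal_oper_le_of_le_span (h.lowerCentralSeries_two_le hm hspan)
    (h.lowerCentralSeries_two_le hm hspan) ?_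
  rintro _ ⟨i, ⟨hi, hi'⟩, rfl⟩ _ ⟨j, ⟨hj, hj'⟩, rfl⟩
  rw [h.lie_eq_zero_of_four_le hm hi hi' hj hj']
  exact zero_mem _

end G1Brackets

/-- the Lie algebra `g¹_{2m}` (`m ≥ 4`) with basis
`X₁,...,X₆, Y₁,...,Y_{2m-6}` (here `X_l = e l`, `Y_k = e (6+k)`) and nonzero brackets
`[X₁,X_j] = X_{j+1}` (`2 ≤ j ≤ 5`), `[X₅,X₂] = [X₃,X₄] = Y₁`, `[X₃,X₂] = Y₂`,
`[Y₂,X₂] = X₅`, `[Y₂,X₃] = X₆`, `[Y_{2t-1},Y_{2t}] = X₆` (`2 ≤ t ≤ m-3`)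
is `2`-abelian: its derived subalgebra is not abelian but `C²g` is abelian. -/
theorem stmt13 (m : ℕ) (hm : 4 ≤ m) (g : Type*) [LieRing g] [LieAlgebra ℂ g]
    (e : ℕ → g)
    (hindep : LinearIndependent ℂ (fun i : Fin (2 * m) => e (i.1 + 1)))
    (hspan : Submodule.span ℂ (Set.range (fun i : Fin (2 * m) => e (i.1 + 1))) = ⊤)
    (hbr : ∀ j, 2 ≤ j → j ≤ 5 → ⁅e 1, e j⁆ = e (j + 1))
    (hb1 : ⁅e 5, e 2⁆ = e 7)
    (hb2 : ⁅e 3, e 4⁆ = e 7)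
    (hb3 : ⁅e 3, e 2⁆ = e 8)
    (hb4 : ⁅e 8, e 2⁆ = e 5)
    (hb5 : ⁅e 8, e 3⁆ = e 6)
    (hb6 : ∀ t, 2 ≤ t → t ≤ m - 3 → ⁅e (2 * t + 5), e (2 * t + 6)⁆ = e 6)
    (hb0 : ∀ i j, 1 ≤ i → i < j → j ≤ 2 * m →
      ¬(i = 1 ∧ 2 ≤ j ∧ j ≤ 5) →
      ¬(i = 2 ∧ j = 5) → ¬(i = 3 ∧ j = 4) → ¬(i = 2 ∧ j = 3) →
      ¬(i = 2 ∧ j = 8) → ¬(i = 3 ∧ j = 8) →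
      ¬(∃ t, 2 ≤ t ∧ t ≤ m - 3 ∧ i = 2 * t + 5 ∧ j = 2 * t + 6) →
      ⁅e i, e j⁆ = 0) :
    ⁅LieModule.lowerCentralSeries ℂ g g 1, LieModule.lowerCentralSeries ℂ g g 1⁆ ≠
        (⊥ : LieIdeal ℂ g) ∧
    ⁅LieModule.lowerCentralSeries ℂ g g 2, LieModule.lowerCentralSeries ℂ g g 2⁆ =
        (⊥ : LieIdeal ℂ g) := by
  have h : G1Brackets m e := ⟨hbr, hb1, hb2, hb3, hb4, hb5, hb6, hb0⟩
  exact ⟨h.lie_lowerCentralSeries_one_ne_bot (hindep.ne_zero ⟨6, by omega⟩),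
    h.lie_lowerCentralSeries_two_eq_bot hm hspan⟩
end

section
/- The 7-dimensional Lie algebra g₇¹¹ with basis X₁,...,X₆,Y₁ and nonzero brackets [X₁,X_j] = X_{j+1} (2 ≤ j ≤ 5), [X₃,X₂] = Y₁, [Y₁,X₂] = X₅ + X₆, [Y₁,X₃] = X₆, i.e. the law g₀⁷ + φ_{3,1} + ψ₁³ + ψ₁⁴, is characteristically nilpotent: every derivation of g₇¹¹ is a nilpotent endomorphism. -/
/-- the 7-dimensional complex Lie algebra `g₇¹¹ = g₀⁷ + φ_{3,1} + ψ₁³ + ψ₁⁴`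
with basis `X₁,...,X₆, Y₁` (here `e 1, ..., e 6, e 7`) and nonzero brackets
`[X₁,X₂] = X₃`, `[X₁,X₃] = X₄`, `[X₁,X₄] = X₅`, `[X₁,X₅] = X₆`, `[X₃,X₂] = Y₁`,
`[Y₁,X₂] = X₅ + X₆`, `[Y₁,X₃] = X₆` is characteristically nilpotent: every
derivation is a nilpotent endomorphism. -/
theorem stmt19 (g : Type*) [LieRing g] [LieAlgebra ℂ g]
    (e : ℕ → g)
    (hindep : LinearIndependent ℂ (fun i : Fin 7 => e (i.1 + 1)))
    (hspan : Submodule.span ℂ (Set.range (fun i : Fin 7 => e (i.1 + 1))) = ⊤)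
    (hbr : ∀ j, 2 ≤ j → j ≤ 5 → ⁅e 1, e j⁆ = e (j + 1))
    (hb1 : ⁅e 3, e 2⁆ = e 7)
    (hb2 : ⁅e 7, e 2⁆ = e 5 + e 6)
    (hb3 : ⁅e 7, e 3⁆ = e 6)
    (hb0 : ∀ i j, 1 ≤ i → i < j → j ≤ 7 →
      ¬(i = 1 ∧ 2 ≤ j ∧ j ≤ 5) → ¬(i = 2 ∧ j = 3) → ¬(i = 2 ∧ j = 7) →
      ¬(i = 3 ∧ j = 7) → ⁅e i, e j⁆ = 0) :
    ∀ D : g →ₗ[ℂ] g, (∀ x y : g, D ⁅x, y⁆ = ⁅D x, y⁆ + ⁅x, D y⁆) →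
      IsNilpotent D := by
  intro D hD
  have h12 : ⁅e 1, e 2⁆ = e 3 := hbr 2 (by norm_num) (by norm_num)
  have h13 : ⁅e 1, e 3⁆ = e 4 := hbr 3 (by norm_num) (by norm_num)
  have h14 : ⁅e 1, e 4⁆ = e 5 := hbr 4 (by norm_num) (by norm_num)
  have h15 : ⁅e 1, e 5⁆ = e 6 := hbr 5 (by norm_num) (by norm_num)
  have h16 : ⁅e 1, e 6⁆ = 0 := hb0 1 6 (by norm_num) (by norm_num) (by norm_num) (by omega) (by omega) (by omega) (by omega)
  have h17 : ⁅e 1, e 7⁆ = 0 := hb0 1 7 (by norm_num) (by norm_num) (by norm_num) (by omega) (by omega) (by omega) (by omega)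
  have h23 : ⁅e 2, e 3⁆ = -e 7 := by rw [← lie_skew, hb1]
  have h24 : ⁅e 2, e 4⁆ = 0 := hb0 2 4 (by norm_num) (by norm_num) (by norm_num) (by omega) (by omega) (by omega) (by omega)
  have h25 : ⁅e 2, e 5⁆ = 0 := hb0 2 5 (by norm_num) (by norm_num) (by norm_num) (by omega) (by omega) (by omega) (by omega)
  have h26 : ⁅e 2, e 6⁆ = 0 := hb0 2 6 (by norm_num) (by norm_num) (by norm_num) (by omega) (by omega) (by omega) (by omega)
  have h27 : ⁅e 2, e 7⁆ = -(e 5 + e 6) := by rw [← lie_skew, hb2]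
  have h34 : ⁅e 3, e 4⁆ = 0 := hb0 3 4 (by norm_num) (by norm_num) (by norm_num) (by omega) (by omega) (by omega) (by omega)
  have h35 : ⁅e 3, e 5⁆ = 0 := hb0 3 5 (by norm_num) (by norm_num) (by norm_num) (by omega) (by omega) (by omega) (by omega)
  have h36 : ⁅e 3, e 6⁆ = 0 := hb0 3 6 (by norm_num) (by norm_num) (by norm_num) (by omega) (by omega) (by omega) (by omega)
  have h37 : ⁅e 3, e 7⁆ = -e 6 := by rw [← lie_skew, hb3]
  have h45 : ⁅e 4, e 5⁆ = 0 := hb0 4 5 (by norm_num) (by norm_num) (by norm_num) (by omega) (by omega) (by omega) (by omega)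
  have h46 : ⁅e 4, e 6⁆ = 0 := hb0 4 6 (by norm_num) (by norm_num) (by norm_num) (by omega) (by omega) (by omega) (by omega)
  have h47 : ⁅e 4, e 7⁆ = 0 := hb0 4 7 (by norm_num) (by norm_num) (by norm_num) (by omega) (by omega) (by omega) (by omega)
  have h56 : ⁅e 5, e 6⁆ = 0 := hb0 5 6 (by norm_num) (by norm_num) (by norm_num) (by omega) (by omega) (by omega) (by omega)
  have h57 : ⁅e 5, e 7⁆ = 0 := hb0 5 7 (by norm_num) (by norm_num) (by norm_num) (by omega) (by omega) (by omega) (by omega)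
  have h67 : ⁅e 6, e 7⁆ = 0 := hb0 6 7 (by norm_num) (by norm_num) (by norm_num) (by omega) (by omega) (by omega) (by omega)
  have h21 : ⁅e 2, e 1⁆ = -⁅e 1, e 2⁆ := (lie_skew _ _).symm
  have h31 : ⁅e 3, e 1⁆ = -⁅e 1, e 3⁆ := (lie_skew _ _).symm
  have h41 : ⁅e 4, e 1⁆ = -⁅e 1, e 4⁆ := (lie_skew _ _).symm
  have h51 : ⁅e 5, e 1⁆ = -⁅e 1, e 5⁆ := (lie_skew _ _).symm
  have h61 : ⁅e 6, e 1⁆ = 0 := by rw [← lie_skew, h16, neg_zero]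
  have h71 : ⁅e 7, e 1⁆ = 0 := by rw [← lie_skew, h17, neg_zero]
  have h32 : ⁅e 3, e 2⁆ = -⁅e 2, e 3⁆ := (lie_skew _ _).symm
  have h42 : ⁅e 4, e 2⁆ = 0 := by rw [← lie_skew, h24, neg_zero]
  have h52 : ⁅e 5, e 2⁆ = 0 := by rw [← lie_skew, h25, neg_zero]
  have h62 : ⁅e 6, e 2⁆ = 0 := by rw [← lie_skew, h26, neg_zero]
  have h72 : ⁅e 7, e 2⁆ = -⁅e 2, e 7⁆ := (lie_skew _ _).symm
  have h43 : ⁅e 4, e 3⁆ = 0 := by rw [← lie_skew, h34, neg_zero]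
  have h53 : ⁅e 5, e 3⁆ = 0 := by rw [← lie_skew, h35, neg_zero]
  have h63 : ⁅e 6, e 3⁆ = 0 := by rw [← lie_skew, h36, neg_zero]
  have h73 : ⁅e 7, e 3⁆ = -⁅e 3, e 7⁆ := (lie_skew _ _).symm
  have h54 : ⁅e 5, e 4⁆ = 0 := by rw [← lie_skew, h45, neg_zero]
  have h64 : ⁅e 6, e 4⁆ = 0 := by rw [← lie_skew, h46, neg_zero]
  have h74 : ⁅e 7, e 4⁆ = 0 := by rw [← lie_skew, h47, neg_zero]
  have h65 : ⁅e 6, e 5⁆ = 0 := by rw [← lie_skew, h56, neg_zero]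
  have h75 : ⁅e 7, e 5⁆ = 0 := by rw [← lie_skew, h57, neg_zero]
  have h76 : ⁅e 7, e 6⁆ = 0 := by rw [← lie_skew, h67, neg_zero]
  have hsp' : ⊤ ≤ Submodule.span ℂ (Set.range (fun i : Fin 7 => e (i.1 + 1))) := hspan.ge
  let b : Module.Basis (Fin 7) ℂ g := Module.Basis.mk hindep hsp'
  have hbe : ∀ i : Fin 7, b i = e (i.1 + 1) := fun i => Module.Basis.mk_apply hindep hsp' i
  have hexp : ∀ v : g, ∃ cc : Fin 7 → ℂ, v = cc 0 • e 1 + cc 1 • e 2 + cc 2 • e 3 +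
      cc 3 • e 4 + cc 4 • e 5 + cc 5 • e 6 + cc 6 • e 7 := by
    intro v
    refine ⟨fun i => b.repr v i, ?_⟩
    have h := b.sum_repr v
    rw [Fin.sum_univ_seven] at h
    simp only [hbe] at h
    norm_num at h
    exact h.symm
  have hzero7 : ∀ c1 c2 c3 c4 c5 c6 c7 : ℂ, c1 • e 1 + c2 • e 2 + c3 • e 3 + c4 • e 4 +
      c5 • e 5 + c6 • e 6 + c7 • e 7 = 0 →
      c1 = 0 ∧ c2 = 0 ∧ c3 = 0 ∧ c4 = 0 ∧ c5 = 0 ∧ c6 = 0 ∧ c7 = 0 := by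
    intro c1 c2 c3 c4 c5 c6 c7 h
    have h2 := Fintype.linearIndependent_iff.mp hindep ![c1,c2,c3,c4,c5,c6,c7] ?_
    · exact ⟨h2 0, h2 1, h2 2, h2 3, h2 4, h2 5, h2 6⟩
    · rw [Fin.sum_univ_seven]
      norm_num
      exact h
  obtain ⟨a1, ha1⟩ := hexp (D (e 1))
  obtain ⟨a2, ha2⟩ := hexp (D (e 2))
  obtain ⟨a3, ha3⟩ := hexp (D (e 3))
  obtain ⟨a4, ha4⟩ := hexp (D (e 4))
  obtain ⟨a5, ha5⟩ := hexp (D (e 5))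
  obtain ⟨a6, ha6⟩ := hexp (D (e 6))
  obtain ⟨a7, ha7⟩ := hexp (D (e 7))
  have g12 := hD (e 1) (e 2)
  simp only [map_add, map_zero, map_neg, neg_neg, neg_zero, lie_neg, neg_lie, ha1, ha2, ha3, ha4, ha5, ha6, ha7, add_lie, lie_add, smul_lie, lie_smul, lie_self, lie_zero, zero_lie, smul_zero, smul_neg, add_zero, zero_add, h12, h13, h14, h15, h16, h17, h21, h23, h24, h25, h26, h27, h31, h32, h34, h35, h36, h37, h41, h42, h43, h45, h46, h47, h51, h52, h53, h54, h56, h57, h61, h62, h63, h64, h65, h67, h71, h72, h73, h74, h75, h76] at g12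
  obtain ⟨E12_1, E12_2, E12_3, E12_4, E12_5, E12_6, E12_7⟩ := hzero7 (a3 0) (a3 1) (-a1 0 - a2 1 + a3 2) (-a2 2 + a3 3) (-a1 6 - a2 3 + a3 4) (-a1 6 - a2 4 + a3 5) (-a1 2 + a3 6) (by linear_combination (norm := module) g12)
  have g13 := hD (e 1) (e 3)
  simp only [map_add, map_zero, map_neg, neg_neg, neg_zero, lie_neg, neg_lie, ha1, ha2, ha3, ha4, ha5, ha6, ha7, add_lie, lie_add, smul_lie, lie_smul, lie_self, lie_zero, zero_lie, smul_zero, smul_neg, add_zero, zero_add, h12, h13, h14, h15, h16, h17, h21, h23, h24, h25, h26, h27, h31, h32, h34, h35, h36, h37, h41, h42, h43, h45, h46, h47, h51, h52, h53, h54, h56, h57, h61, h62, h63, h64, h65, h67, h71, h72, h73, h74, h75, h76] at g13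
  obtain ⟨E13_1, E13_2, E13_3, E13_4, E13_5, E13_6, E13_7⟩ := hzero7 (a4 0) (a4 1) (-a3 1 + a4 2) (-a1 0 - a3 2 + a4 3) (-a3 3 + a4 4) (-a1 6 - a3 4 + a4 5) (a1 1 + a4 6) (by linear_combination (norm := module) g13)
  have g14 := hD (e 1) (e 4)
  simp only [map_add, map_zero, map_neg, neg_neg, neg_zero, lie_neg, neg_lie, ha1, ha2, ha3, ha4, ha5, ha6, ha7, add_lie, lie_add, smul_lie, lie_smul, lie_self, lie_zero, zero_lie, smul_zero, smul_neg, add_zero, zero_add, h12, h13, h14, h15, h16, h17, h21, h23, h24, h25, h26, h27, h31, h32, h34, h35, h36, h37, h41, h42, h43, h45, h46, h47, h51, h52, h53, h54, h56, h57, h61, h62, h63, h64, h65, h67, h71, h72, h73, h74, h75, h76] at g14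
  obtain ⟨E14_1, E14_2, E14_3, E14_4, E14_5, E14_6, E14_7⟩ := hzero7 (a5 0) (a5 1) (-a4 1 + a5 2) (-a4 2 + a5 3) (-a1 0 - a4 3 + a5 4) (-a4 4 + a5 5) (a5 6) (by linear_combination (norm := module) g14)
  have g15 := hD (e 1) (e 5)
  simp only [map_add, map_zero, map_neg, neg_neg, neg_zero, lie_neg, neg_lie, ha1, ha2, ha3, ha4, ha5, ha6, ha7, add_lie, lie_add, smul_lie, lie_smul, lie_self, lie_zero, zero_lie, smul_zero, smul_neg, add_zero, zero_add, h12, h13, h14, h15, h16, h17, h21, h23, h24, h25, h26, h27, h31, h32, h34, h35, h36, h37, h41, h42, h43, h45, h46, h47, h51, h52, h53, h54, h56, h57, h61, h62, h63, h64, h65, h67, h71, h72, h73, h74, h75, h76] at g15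
  obtain ⟨E15_1, E15_2, E15_3, E15_4, E15_5, E15_6, E15_7⟩ := hzero7 (a6 0) (a6 1) (-a5 1 + a6 2) (-a5 2 + a6 3) (-a5 3 + a6 4) (-a1 0 - a5 4 + a6 5) (a6 6) (by linear_combination (norm := module) g15)
  have g16 := hD (e 1) (e 6)
  simp only [map_add, map_zero, map_neg, neg_neg, neg_zero, lie_neg, neg_lie, ha1, ha2, ha3, ha4, ha5, ha6, ha7, add_lie, lie_add, smul_lie, lie_smul, lie_self, lie_zero, zero_lie, smul_zero, smul_neg, add_zero, zero_add, h12, h13, h14, h15, h16, h17, h21, h23, h24, h25, h26, h27, h31, h32, h34, h35, h36, h37, h41, h42, h43, h45, h46, h47, h51, h52, h53, h54, h56, h57, h61, h62, h63, h64, h65, h67, h71, h72, h73, h74, h75, h76] at g16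
  obtain ⟨_, _, E16_3, E16_4, E16_5, E16_6, _⟩ := hzero7 (0:ℂ) (0:ℂ) (-a6 1) (-a6 2) (-a6 3) (-a6 4) (0:ℂ) (by linear_combination (norm := module) g16)
  have g17 := hD (e 1) (e 7)
  simp only [map_add, map_zero, map_neg, neg_neg, neg_zero, lie_neg, neg_lie, ha1, ha2, ha3, ha4, ha5, ha6, ha7, add_lie, lie_add, smul_lie, lie_smul, lie_self, lie_zero, zero_lie, smul_zero, smul_neg, add_zero, zero_add, h12, h13, h14, h15, h16, h17, h21, h23, h24, h25, h26, h27, h31, h32, h34, h35, h36, h37, h41, h42, h43, h45, h46, h47, h51, h52, h53, h54, h56, h57, h61, h62, h63, h64, h65, h67, h71, h72, h73, h74, h75, h76] at g17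
  obtain ⟨_, _, E17_3, E17_4, E17_5, E17_6, _⟩ := hzero7 (0:ℂ) (0:ℂ) (-a7 1) (-a7 2) (a1 1 - a7 3) (a1 1 + a1 2 - a7 4) (0:ℂ) (by linear_combination (norm := module) g17)
  have g23 := hD (e 2) (e 3)
  simp only [map_add, map_zero, map_neg, neg_neg, neg_zero, lie_neg, neg_lie, ha1, ha2, ha3, ha4, ha5, ha6, ha7, add_lie, lie_add, smul_lie, lie_smul, lie_self, lie_zero, zero_lie, smul_zero, smul_neg, add_zero, zero_add, h12, h13, h14, h15, h16, h17, h21, h23, h24, h25, h26, h27, h31, h32, h34, h35, h36, h37, h41, h42, h43, h45, h46, h47, h51, h52, h53, h54, h56, h57, h61, h62, h63, h64, h65, h67, h71, h72, h73, h74, h75, h76] at g23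
  obtain ⟨E23_1, E23_2, E23_3, E23_4, E23_5, E23_6, E23_7⟩ := hzero7 (-a7 0) (-a7 1) (a3 0 - a7 2) (-a2 0 - a7 3) (a3 6 - a7 4) (-a2 6 + a3 6 - a7 5) (a2 1 + a3 2 - a7 6) (by linear_combination (norm := module) g23)
  have g24 := hD (e 2) (e 4)
  simp only [map_add, map_zero, map_neg, neg_neg, neg_zero, lie_neg, neg_lie, ha1, ha2, ha3, ha4, ha5, ha6, ha7, add_lie, lie_add, smul_lie, lie_smul, lie_self, lie_zero, zero_lie, smul_zero, smul_neg, add_zero, zero_add, h12, h13, h14, h15, h16, h17, h21, h23, h24, h25, h26, h27, h31, h32, h34, h35, h36, h37, h41, h42, h43, h45, h46, h47, h51, h52, h53, h54, h56, h57, h61, h62, h63, h64, h65, h67, h71, h72, h73, h74, h75, h76] at g24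
  obtain ⟨_, _, E24_3, _, E24_5, E24_6, E24_7⟩ := hzero7 (0:ℂ) (0:ℂ) (a4 0) (0:ℂ) (-a2 0 + a4 6) (a4 6) (a4 2) (by linear_combination (norm := module) g24)
  have g25 := hD (e 2) (e 5)
  simp only [map_add, map_zero, map_neg, neg_neg, neg_zero, lie_neg, neg_lie, ha1, ha2, ha3, ha4, ha5, ha6, ha7, add_lie, lie_add, smul_lie, lie_smul, lie_self, lie_zero, zero_lie, smul_zero, smul_neg, add_zero, zero_add, h12, h13, h14, h15, h16, h17, h21, h23, h24, h25, h26, h27, h31, h32, h34, h35, h36, h37, h41, h42, h43, h45, h46, h47, h51, h52, h53, h54, h56, h57, h61, h62, h63, h64, h65, h67, h71, h72, h73, h74, h75, h76] at g25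
  obtain ⟨_, _, E25_3, _, E25_5, E25_6, E25_7⟩ := hzero7 (0:ℂ) (0:ℂ) (a5 0) (0:ℂ) (a5 6) (-a2 0 + a5 6) (a5 2) (by linear_combination (norm := module) g25)
  have g26 := hD (e 2) (e 6)
  simp only [map_add, map_zero, map_neg, neg_neg, neg_zero, lie_neg, neg_lie, ha1, ha2, ha3, ha4, ha5, ha6, ha7, add_lie, lie_add, smul_lie, lie_smul, lie_self, lie_zero, zero_lie, smul_zero, smul_neg, add_zero, zero_add, h12, h13, h14, h15, h16, h17, h21, h23, h24, h25, h26, h27, h31, h32, h34, h35, h36, h37, h41, h42, h43, h45, h46, h47, h51, h52, h53, h54, h56, h57, h61, h62, h63, h64, h65, h67, h71, h72, h73, h74, h75, h76] at g26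
  obtain ⟨_, _, E26_3, _, E26_5, E26_6, E26_7⟩ := hzero7 (0:ℂ) (0:ℂ) (a6 0) (0:ℂ) (a6 6) (a6 6) (a6 2) (by linear_combination (norm := module) g26)
  have g27 := hD (e 2) (e 7)
  simp only [map_add, map_zero, map_neg, neg_neg, neg_zero, lie_neg, neg_lie, ha1, ha2, ha3, ha4, ha5, ha6, ha7, add_lie, lie_add, smul_lie, lie_smul, lie_self, lie_zero, zero_lie, smul_zero, smul_neg, add_zero, zero_add, h12, h13, h14, h15, h16, h17, h21, h23, h24, h25, h26, h27, h31, h32, h34, h35, h36, h37, h41, h42, h43, h45, h46, h47, h51, h52, h53, h54, h56, h57, h61, h62, h63, h64, h65, h67, h71, h72, h73, h74, h75, h76] at g27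
  obtain ⟨E27_1, E27_2, E27_3, E27_4, E27_5, E27_6, E27_7⟩ := hzero7 (-a5 0 - a6 0) (-a5 1 - a6 1) (-a5 2 - a6 2 + a7 0) (-a5 3 - a6 3) (a2 1 - a5 4 - a6 4 + a7 6) (a2 1 + a2 2 - a5 5 - a6 5 + a7 6) (-a5 6 - a6 6 + a7 2) (by linear_combination (norm := module) g27)
  have g34 := hD (e 3) (e 4)
  simp only [map_add, map_zero, map_neg, neg_neg, neg_zero, lie_neg, neg_lie, ha1, ha2, ha3, ha4, ha5, ha6, ha7, add_lie, lie_add, smul_lie, lie_smul, lie_self, lie_zero, zero_lie, smul_zero, smul_neg, add_zero, zero_add, h12, h13, h14, h15, h16, h17, h21, h23, h24, h25, h26, h27, h31, h32, h34, h35, h36, h37, h41, h42, h43, h45, h46, h47, h51, h52, h53, h54, h56, h57, h61, h62, h63, h64, h65, h67, h71, h72, h73, h74, h75, h76] at g34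
  obtain ⟨_, _, _, E34_4, E34_5, E34_6, E34_7⟩ := hzero7 (0:ℂ) (0:ℂ) (0:ℂ) (a4 0) (-a3 0) (a4 6) (-a4 1) (by linear_combination (norm := module) g34)
  have g35 := hD (e 3) (e 5)
  simp only [map_add, map_zero, map_neg, neg_neg, neg_zero, lie_neg, neg_lie, ha1, ha2, ha3, ha4, ha5, ha6, ha7, add_lie, lie_add, smul_lie, lie_smul, lie_self, lie_zero, zero_lie, smul_zero, smul_neg, add_zero, zero_add, h12, h13, h14, h15, h16, h17, h21, h23, h24, h25, h26, h27, h31, h32, h34, h35, h36, h37, h41, h42, h43, h45, h46, h47, h51, h52, h53, h54, h56, h57, h61, h62, h63, h64, h65, h67, h71, h72, h73, h74, h75, h76] at g35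
  obtain ⟨_, _, _, E35_4, _, E35_6, E35_7⟩ := hzero7 (0:ℂ) (0:ℂ) (0:ℂ) (a5 0) (0:ℂ) (-a3 0 + a5 6) (-a5 1) (by linear_combination (norm := module) g35)
  have g36 := hD (e 3) (e 6)
  simp only [map_add, map_zero, map_neg, neg_neg, neg_zero, lie_neg, neg_lie, ha1, ha2, ha3, ha4, ha5, ha6, ha7, add_lie, lie_add, smul_lie, lie_smul, lie_self, lie_zero, zero_lie, smul_zero, smul_neg, add_zero, zero_add, h12, h13, h14, h15, h16, h17, h21, h23, h24, h25, h26, h27, h31, h32, h34, h35, h36, h37, h41, h42, h43, h45, h46, h47, h51, h52, h53, h54, h56, h57, h61, h62, h63, h64, h65, h67, h71, h72, h73, h74, h75, h76] at g36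
  obtain ⟨_, _, _, E36_4, _, E36_6, E36_7⟩ := hzero7 (0:ℂ) (0:ℂ) (0:ℂ) (a6 0) (0:ℂ) (a6 6) (-a6 1) (by linear_combination (norm := module) g36)
  have g37 := hD (e 3) (e 7)
  simp only [map_add, map_zero, map_neg, neg_neg, neg_zero, lie_neg, neg_lie, ha1, ha2, ha3, ha4, ha5, ha6, ha7, add_lie, lie_add, smul_lie, lie_smul, lie_self, lie_zero, zero_lie, smul_zero, smul_neg, add_zero, zero_add, h12, h13, h14, h15, h16, h17, h21, h23, h24, h25, h26, h27, h31, h32, h34, h35, h36, h37, h41, h42, h43, h45, h46, h47, h51, h52, h53, h54, h56, h57, h61, h62, h63, h64, h65, h67, h71, h72, h73, h74, h75, h76] at g37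
  obtain ⟨E37_1, E37_2, E37_3, E37_4, E37_5, E37_6, E37_7⟩ := hzero7 (-a6 0) (-a6 1) (-a6 2) (-a6 3 + a7 0) (a3 1 - a6 4) (a3 1 + a3 2 - a6 5 + a7 6) (-a6 6 - a7 1) (by linear_combination (norm := module) g37)
  have g45 := hD (e 4) (e 5)
  simp only [map_add, map_zero, map_neg, neg_neg, neg_zero, lie_neg, neg_lie, ha1, ha2, ha3, ha4, ha5, ha6, ha7, add_lie, lie_add, smul_lie, lie_smul, lie_self, lie_zero, zero_lie, smul_zero, smul_neg, add_zero, zero_add, h12, h13, h14, h15, h16, h17, h21, h23, h24, h25, h26, h27, h31, h32, h34, h35, h36, h37, h41, h42, h43, h45, h46, h47, h51, h52, h53, h54, h56, h57, h61, h62, h63, h64, h65, h67, h71, h72, h73, h74, h75, h76] at g45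
  obtain ⟨_, _, _, _, E45_5, E45_6, _⟩ := hzero7 (0:ℂ) (0:ℂ) (0:ℂ) (0:ℂ) (a5 0) (-a4 0) (0:ℂ) (by linear_combination (norm := module) g45)
  have g46 := hD (e 4) (e 6)
  simp only [map_add, map_zero, map_neg, neg_neg, neg_zero, lie_neg, neg_lie, ha1, ha2, ha3, ha4, ha5, ha6, ha7, add_lie, lie_add, smul_lie, lie_smul, lie_self, lie_zero, zero_lie, smul_zero, smul_neg, add_zero, zero_add, h12, h13, h14, h15, h16, h17, h21, h23, h24, h25, h26, h27, h31, h32, h34, h35, h36, h37, h41, h42, h43, h45, h46, h47, h51, h52, h53, h54, h56, h57, h61, h62, h63, h64, h65, h67, h71, h72, h73, h74, h75, h76] at g46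
  obtain ⟨_, _, _, _, E46_5, _, _⟩ := hzero7 (0:ℂ) (0:ℂ) (0:ℂ) (0:ℂ) (a6 0) (0:ℂ) (0:ℂ) (by linear_combination (norm := module) g46)
  have g47 := hD (e 4) (e 7)
  simp only [map_add, map_zero, map_neg, neg_neg, neg_zero, lie_neg, neg_lie, ha1, ha2, ha3, ha4, ha5, ha6, ha7, add_lie, lie_add, smul_lie, lie_smul, lie_self, lie_zero, zero_lie, smul_zero, smul_neg, add_zero, zero_add, h12, h13, h14, h15, h16, h17, h21, h23, h24, h25, h26, h27, h31, h32, h34, h35, h36, h37, h41, h42, h43, h45, h46, h47, h51, h52, h53, h54, h56, h57, h61, h62, h63, h64, h65, h67, h71, h72, h73, h74, h75, h76] at g47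
  obtain ⟨_, _, _, _, E47_5, E47_6, _⟩ := hzero7 (0:ℂ) (0:ℂ) (0:ℂ) (0:ℂ) (a4 1 + a7 0) (a4 1 + a4 2) (0:ℂ) (by linear_combination (norm := module) g47)
  have g56 := hD (e 5) (e 6)
  simp only [map_add, map_zero, map_neg, neg_neg, neg_zero, lie_neg, neg_lie, ha1, ha2, ha3, ha4, ha5, ha6, ha7, add_lie, lie_add, smul_lie, lie_smul, lie_self, lie_zero, zero_lie, smul_zero, smul_neg, add_zero, zero_add, h12, h13, h14, h15, h16, h17, h21, h23, h24, h25, h26, h27, h31, h32, h34, h35, h36, h37, h41, h42, h43, h45, h46, h47, h51, h52, h53, h54, h56, h57, h61, h62, h63, h64, h65, h67, h71, h72, h73, h74, h75, h76] at g56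
  obtain ⟨_, _, _, _, _, E56_6, _⟩ := hzero7 (0:ℂ) (0:ℂ) (0:ℂ) (0:ℂ) (0:ℂ) (a6 0) (0:ℂ) (by linear_combination (norm := module) g56)
  have g57 := hD (e 5) (e 7)
  simp only [map_add, map_zero, map_neg, neg_neg, neg_zero, lie_neg, neg_lie, ha1, ha2, ha3, ha4, ha5, ha6, ha7, add_lie, lie_add, smul_lie, lie_smul, lie_self, lie_zero, zero_lie, smul_zero, smul_neg, add_zero, zero_add, h12, h13, h14, h15, h16, h17, h21, h23, h24, h25, h26, h27, h31, h32, h34, h35, h36, h37, h41, h42, h43, h45, h46, h47, h51, h52, h53, h54, h56, h57, h61, h62, h63, h64, h65, h67, h71, h72, h73, h74, h75, h76] at g57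
  obtain ⟨_, _, _, _, E57_5, E57_6, _⟩ := hzero7 (0:ℂ) (0:ℂ) (0:ℂ) (0:ℂ) (a5 1) (a5 1 + a5 2 + a7 0) (0:ℂ) (by linear_combination (norm := module) g57)
  have g67 := hD (e 6) (e 7)
  simp only [map_add, map_zero, map_neg, neg_neg, neg_zero, lie_neg, neg_lie, ha1, ha2, ha3, ha4, ha5, ha6, ha7, add_lie, lie_add, smul_lie, lie_smul, lie_self, lie_zero, zero_lie, smul_zero, smul_neg, add_zero, zero_add, h12, h13, h14, h15, h16, h17, h21, h23, h24, h25, h26, h27, h31, h32, h34, h35, h36, h37, h41, h42, h43, h45, h46, h47, h51, h52, h53, h54, h56, h57, h61, h62, h63, h64, h65, h67, h71, h72, h73, h74, h75, h76] at g67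
  obtain ⟨_, _, _, _, E67_5, E67_6, _⟩ := hzero7 (0:ℂ) (0:ℂ) (0:ℂ) (0:ℂ) (a6 1) (a6 1 + a6 2) (0:ℂ) (by linear_combination (norm := module) g67)
  have T6_1 : a6 0 = 0 := by linear_combination E15_1
  have T6_2 : a6 1 = 0 := by linear_combination E15_2
  have T6_3 : a6 2 = 0 := by linear_combination E14_2 + E15_3
  have T6_4 : a6 3 = 0 := by linear_combination E13_2 + E14_3 + E15_4
  have T6_5 : a6 4 = 0 := by linear_combination E12_2 + E13_3 + E14_4 + E15_5
  have T6_6 : a6 5 = 0 := by linear_combination (11/2)*E12_2 + E12_3 + (-5)*E12_4 + (11/2)*E13_3 + (3/2)*E13_4 + (-5)*E13_5 + (11/2)*E14_4 + (3/2)*E14_5 + (-5)*E14_6 + (11/2)*E15_5 + (-4)*E15_6 + (1/2)*E23_7 + (11/2)*E27_5 + (-5)*E27_6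
  have T6_7 : a6 6 = 0 := by linear_combination E15_7
  have T5_1 : a5 0 = 0 := by linear_combination E14_1
  have T5_2 : a5 1 = 0 := by linear_combination E14_2
  have T5_3 : a5 2 = 0 := by linear_combination E13_2 + E14_3
  have T5_4 : a5 3 = 0 := by linear_combination E12_2 + E13_3 + E14_4
  have T5_5 : a5 4 = 0 := by linear_combination (9/2)*E12_2 + E12_3 + (-4)*E12_4 + (9/2)*E13_3 + (3/2)*E13_4 + (-4)*E13_5 + (9/2)*E14_4 + (3/2)*E14_5 + (-4)*E14_6 + (9/2)*E15_5 + (-4)*E15_6 + (1/2)*E23_7 + (9/2)*E27_5 + (-4)*E27_6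
  have T5_7 : a5 6 = 0 := by linear_combination E14_7
  have T4_1 : a4 0 = 0 := by linear_combination E13_1
  have T4_2 : a4 1 = 0 := by linear_combination E13_2
  have T4_3 : a4 2 = 0 := by linear_combination E12_2 + E13_3
  have T4_4 : a4 3 = 0 := by linear_combination (7/2)*E12_2 + E12_3 + (-3)*E12_4 + (7/2)*E13_3 + (3/2)*E13_4 + (-3)*E13_5 + (7/2)*E14_4 + (1/2)*E14_5 + (-3)*E14_6 + (7/2)*E15_5 + (-3)*E15_6 + (1/2)*E23_7 + (7/2)*E27_5 + (-3)*E27_6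
  have T4_7 : a4 6 = 0 := by linear_combination -E12_7 + E13_7 - E17_6 + E23_5
  have T7_1 : a7 0 = 0 := by linear_combination -E23_1
  have T7_2 : a7 1 = 0 := by linear_combination -E17_3
  have T7_3 : a7 2 = 0 := by linear_combination -E17_4
  have T7_4 : a7 3 = 0 := by linear_combination E12_7 - E17_5 + E17_6 - E23_5
  have T7_7 : a7 6 = 0 := by linear_combination (4)*E12_2 + E12_3 + (-3)*E12_4 + (4)*E13_3 + E13_4 + (-3)*E13_5 + (4)*E14_4 + E14_5 + (-3)*E14_6 + (4)*E15_5 + (-3)*E15_6 + (4)*E27_5 + (-3)*E27_6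
  have T3_1 : a3 0 = 0 := by linear_combination E12_1
  have T3_2 : a3 1 = 0 := by linear_combination E12_2
  have T3_3 : a3 2 = 0 := by linear_combination (5/2)*E12_2 + E12_3 + (-2)*E12_4 + (5/2)*E13_3 + (1/2)*E13_4 + (-2)*E13_5 + (5/2)*E14_4 + (1/2)*E14_5 + (-2)*E14_6 + (5/2)*E15_5 + (-2)*E15_6 + (1/2)*E23_7 + (5/2)*E27_5 + (-2)*E27_6
  have T1_1 : a1 0 = 0 := by linear_combination E12_2 - E12_4 + E13_3 - E13_5 + E14_4 - E14_6 + E15_5 - E15_6 + E27_5 - E27_6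
  have T2_1 : a2 0 = 0 := by linear_combination -E12_7 + E17_5 - E17_6 - E23_4 + E23_5
  have T1_2 : a1 1 = 0 := by linear_combination E12_7 + E17_6 - E23_5
  have T2_2 : a2 1 = 0 := by linear_combination (3/2)*E12_2 - E12_4 + (3/2)*E13_3 + (1/2)*E13_4 - E13_5 + (3/2)*E14_4 + (1/2)*E14_5 - E14_6 + (3/2)*E15_5 - E15_6 + (1/2)*E23_7 + (3/2)*E27_5 - E27_6
  have Ha1 : D (e 1) = a1 2 • e 3 + a1 3 • e 4 + a1 4 • e 5 + a1 5 • e 6 + a1 6 • e 7 := by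
    rw [ha1, T1_1, T1_2]
    module
  have Ha2 : D (e 2) = a2 2 • e 3 + a2 3 • e 4 + a2 4 • e 5 + a2 5 • e 6 + a2 6 • e 7 := by
    rw [ha2, T2_1, T2_2]
    module
  have Ha3 : D (e 3) = a3 3 • e 4 + a3 4 • e 5 + a3 5 • e 6 + a3 6 • e 7 := by
    rw [ha3, T3_1, T3_2, T3_3]
    module
  have Ha4 : D (e 4) = a4 4 • e 5 + a4 5 • e 6 := by
    rw [ha4, T4_1, T4_2, T4_3, T4_4, T4_7]
    module
  have Ha7 : D (e 7) = a7 4 • e 5 + a7 5 • e 6 := by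
    rw [ha7, T7_1, T7_2, T7_3, T7_4, T7_7]
    module
  have Ha5 : D (e 5) = a5 5 • e 6 := by
    rw [ha5, T5_1, T5_2, T5_3, T5_4, T5_5, T5_7]
    module
  have Ha6 : D (e 6) = 0 := by
    rw [ha6, T6_1, T6_2, T6_3, T6_4, T6_5, T6_6, T6_7]
    module
  refine ⟨5, ?_⟩
  have hpow : (D^5 : g →ₗ[ℂ] g) = D * D * D * D * D := by
    rw [pow_succ, pow_succ, pow_succ, pow_succ, pow_one]
  rw [← LinearMap.ker_eq_top, eq_top_iff, ← hspan, Submodule.span_le]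
  rintro v ⟨i, rfl⟩
  simp only [SetLike.mem_coe, LinearMap.mem_ker, hpow, Module.End.mul_apply]
  fin_cases i <;>
    simp only [Ha1, Ha2, Ha3, Ha4, Ha5, Ha6, Ha7, map_add, map_smul, map_zero,
      smul_zero, add_zero, zero_add, smul_add]
end
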